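/- arXiv:2104.05346 — 10 statements merged into one kernel-verified Lean document; each statement's English description precedes it below -/
import Mathlib

section
/- For λ ∈ (0,1] and θ ∈ ℝ, the function N(z) = (1 − λz²)(1 − λ·conj(z))² satisfies Re N(z) ≥ (1−λ)³ ≥ 0 for all z on the unit circle |z| = 1. -/
/-! On the unit circle `z * conj z = 1`, so with `x = Re z` the real part of `N(z)` is the
quadratic `1 - λ³ - 2λ(1-λ)x - λ(1-λ)(2x² - 1)` in `x`. Its excess over `(1-λ)³` factors as
`2λ(1-λ)(1-x)(2+x)`, which is nonnegative for `λ ∈ [0,1]` and `x ∈ [-1,1]`. -/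

theorem re_mul_one_sub_conj_sq_of_norm_eq_one (lam : ℝ) {z : ℂ} (hz : ‖z‖ = 1) :
    ((1 - (lam : ℂ) * z ^ 2) * (1 - (lam : ℂ) * (starRingEnd ℂ) z) ^ 2).re =
      1 - lam ^ 3 - 2 * lam * (1 - lam) * z.re - lam * (1 - lam) * (2 * z.re ^ 2 - 1) := by
  have hnormSq : z.re ^ 2 + z.im ^ 2 = 1 := by
    have h := Complex.normSq_apply z
    rw [← Complex.sq_norm, hz] at h
    linear_combination -h
  simp only [Complex.sub_re, Complex.mul_re, Complex.mul_im, Complex.sub_im, Complex.one_re,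
    Complex.one_im, Complex.ofReal_re, Complex.ofReal_im, pow_two, Complex.conj_re,
    Complex.conj_im]
  linear_combination
    (lam - lam ^ 2 - lam ^ 3 * (z.re ^ 2 + z.im ^ 2 + 1) + 2 * lam ^ 2 * z.re) * hnormSq

theorem one_sub_cube_le_of_mem_Icc {lam x : ℝ} (hlam : lam ∈ Set.Icc (0 : ℝ) 1)
    (hx : x ∈ Set.Icc (-1 : ℝ) 1) :
    (1 - lam) ^ 3 ≤
      1 - lam ^ 3 - 2 * lam * (1 - lam) * x - lam * (1 - lam) * (2 * x ^ 2 - 1) := by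
  obtain ⟨hlam0, hlam1⟩ := hlam
  obtain ⟨hx0, hx1⟩ := hx
  have hexcess : 1 - lam ^ 3 - 2 * lam * (1 - lam) * x - lam * (1 - lam) * (2 * x ^ 2 - 1)
      - (1 - lam) ^ 3 = 2 * lam * (1 - lam) * (1 - x) * (2 + x) := by ring
  have : 0 ≤ 2 * lam * (1 - lam) * (1 - x) * (2 + x) := by
    have := sub_nonneg.2 hlam1
    have := sub_nonneg.2 hx1
    have : (0 : ℝ) ≤ 2 + x := by linarith
    positivity
  linarith

/-- For `λ ∈ (0,1]`, `N(z) = (1 − λz²)(1 − λ conj z)²` has `Re N(z) ≥ (1−λ)³ ≥ 0` on the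
unit circle. -/
theorem stmt_2 (lam : ℝ) (hlam : lam ∈ Set.Ioc (0 : ℝ) 1) (N : ℂ → ℂ)
    (hN : ∀ z, N z = (1 - (lam : ℂ) * z ^ 2) * (1 - (lam : ℂ) * (starRingEnd ℂ) z) ^ 2) :
    ∀ z : ℂ, ‖z‖ = 1 → (1 - lam) ^ 3 ≤ (N z).re ∧ (0 : ℝ) ≤ (1 - lam) ^ 3 := by
  intro z hz
  have hre : z.re ∈ Set.Icc (-1 : ℝ) 1 := abs_le.mp (hz ▸ Complex.abs_re_le_norm z)
  refine ⟨?_, pow_nonneg (sub_nonneg.2 hlam.2) 3⟩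
  rw [hN, re_mul_one_sub_conj_sq_of_norm_eq_one lam hz]
  exact one_sub_cube_le_of_mem_Icc (Set.Ioc_subset_Icc_self hlam) hre
end

section
/- For λ ∈ (0,1], θ ∈ ℝ, and the function f_θ(z) = z/(1 − (1+λ)e^{iθ}z + λe^{2iθ}z²), the expression Re{(1 − e^{iθ}z)²·f_θ'(z)} is strictly positive for every z in the open unit disk. Consequently f_θ is convex in the direction 2π − θ. -/
open Complex Metric

/-- A set `D ⊆ ℂ` is convex in the direction `γ` if every line parallel to the line through
`0` and `e^{iγ}` meets `D` in a connected set. -/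
def ConvexInDirection (γ : ℝ) (D : Set ℂ) : Prop :=
  ∀ b : ℂ, IsPreconnected ((fun t : ℝ => b + (t : ℂ) * Complex.exp ((γ : ℂ) * Complex.I)) ⁻¹' D)

/-!
Write `a = e^{iθ}` and `g z = z / ((1 - z)(1 - λz))`, so that `f z = a⁻¹ g(a z)`; all three claims
reduce to `g`. Positivity: `(1 - z)² g'(z) = (1 - λz²)/(1 - λz)²`, and the real part of
`(1 - λz²) conj((1 - λz)²)` is `|1 - λz|²(1 - λ|z|²) + 2λ(1 - λ)(Im z)²`. Injectivity:
`g z = g w` forces `(z - w)(1 - λzw) = 0`. Convexity: the Cayley variable `u = (1 + z)/(1 - z)`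
runs over the right half-plane and `W = g z` becomes a quadratic equation for `u`, so `W ∈ g(𝔻)`
iff that quadratic has a root with positive real part. This is a polynomial condition on
`(Re W, Im W)` which is preserved by increasing `Re W`; hence every horizontal line meets `g(𝔻)`
in a half-line, and rotating by `a⁻¹` turns horizontal lines into lines of direction `2π - θ`.
-/

theorem norm_ofReal_mul_lt_one {lam : ℝ} (h0 : 0 ≤ lam) (h1 : lam ≤ 1) {z : ℂ} (hz : ‖z‖ < 1) :
    ‖(lam : ℂ) * z‖ < 1 := by
  rw [norm_mul, norm_real, Real.norm_of_nonneg h0]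
  nlinarith [norm_nonneg z]

theorem re_one_add_div_one_sub_pos {z : ℂ} (hz : ‖z‖ < 1) : 0 < ((1 + z) / (1 - z)).re := by
  have hns : z.re ^ 2 + z.im ^ 2 < 1 := by
    rw [← sq_lt_one_iff₀ (norm_nonneg z), Complex.sq_norm, normSq_apply] at hz
    nlinarith
  rw [div_re, ← add_div]
  apply div_pos
  · simp only [add_re, add_im, sub_re, sub_im, one_re, one_im]
    nlinarith
  · exact normSq_pos.2 (isUnit_one_sub_of_norm_lt_one hz).ne_zero

theorem norm_sub_one_div_add_one_lt_one {u : ℂ} (hu : 0 < u.re) : ‖(u - 1) / (u + 1)‖ < 1 := by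
  have hu1 : 0 < ‖u + 1‖ := norm_pos_iff.2 fun h => by
    have := congrArg re h
    simp only [add_re, one_re, zero_re] at this
    linarith
  rw [norm_div, div_lt_one hu1, ← sq_lt_sq₀ (norm_nonneg _) (norm_nonneg _), Complex.sq_norm,
    Complex.sq_norm, normSq_apply, normSq_apply]
  simp only [add_re, add_im, sub_re, sub_im, one_re, one_im]
  nlinarith

theorem exists_sq_eq_re_nonneg (D : ℂ) : ∃ r : ℂ, r ^ 2 = D ∧ 0 ≤ r.re := by
  obtain ⟨r, hr⟩ := IsAlgClosed.exists_pow_nat_eq D two_pos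
  rcases le_total 0 r.re with h | h
  · exact ⟨r, hr, h⟩
  · exact ⟨-r, by rw [neg_sq, hr], by simpa using h⟩

theorem sq_lt_re_sq_iff (x : ℝ) (r : ℂ) :
    x ^ 2 < r.re ^ 2 ↔ x ^ 2 < (r ^ 2).re ∨ 4 * x ^ 2 * (x ^ 2 - (r ^ 2).re) < (r ^ 2).im ^ 2 := by
  have hre : (r ^ 2).re = r.re ^ 2 - r.im ^ 2 := by simp [sq]
  have him : (r ^ 2).im = 2 * r.re * r.im := by simp [sq]; ring
  -- the second alternative reads `(x² - (Re r)²) (x² + (Im r)²) < 0`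
  rw [hre, him]
  constructor
  · intro h
    rcases eq_or_ne r.im 0 with hb | hb
    · left; simp [hb, h]
    · right; nlinarith [sq_pos_of_ne_zero hb, sq_nonneg x]
  · rintro (h | h)
    · nlinarith [sq_nonneg r.im]
    · by_contra! h'
      nlinarith [mul_nonneg (sub_nonneg.2 h') (add_nonneg (sq_nonneg x) (sq_nonneg r.im))]

theorem exists_re_pos_sq_sub_eq_iff (β D : ℂ) :
    (∃ u : ℂ, 0 < u.re ∧ (u - β) ^ 2 = D) ↔
      0 < β.re ∨ β.re ^ 2 < D.re ∨ 4 * β.re ^ 2 * (β.re ^ 2 - D.re) < D.im ^ 2 := by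
  obtain ⟨r, rfl, hr⟩ := exists_sq_eq_re_nonneg D
  rw [← sq_lt_re_sq_iff]
  constructor
  · rintro ⟨u, hu, hur⟩
    by_contra! h
    have hre : u.re - β.re = r.re ∨ u.re - β.re = -r.re := by
      rcases sq_eq_sq_iff_eq_or_eq_neg.1 hur with h | h
      · left; simpa using congrArg re h
      · right; simpa using congrArg re h
    rcases hre with h' | h' <;> nlinarith
  · rintro (h | h)
    · exact ⟨β + r, by simp; linarith, by ring⟩
    · exact ⟨β + r, by simp; nlinarith, by ring⟩

section rotation

variable {a : ℂ} {h : ℂ → ℂ}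

theorem deriv_inv_mul_comp_mul (ha : a ≠ 0) (z : ℂ) :
    deriv (fun z => a⁻¹ * h (a * z)) z = deriv h (a * z) := by
  rw [deriv_const_mul_field, deriv_comp_mul_left, smul_eq_mul, inv_mul_cancel_left₀ ha]

theorem mem_image_inv_mul_comp_mul_ball (ha : ‖a‖ = 1) (w : ℂ) :
    w ∈ (fun z => a⁻¹ * h (a * z)) '' ball 0 1 ↔ a * w ∈ h '' ball 0 1 := by
  have ha0 : a ≠ 0 := norm_ne_zero_iff.1 (by rw [ha]; exact one_ne_zero)
  constructor
  · rintro ⟨z, hz, rfl⟩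
    refine ⟨a * z, by simpa [norm_mul, ha] using hz, ?_⟩
    rw [mul_inv_cancel_left₀ ha0]
  · rintro ⟨z, hz, hw⟩
    refine ⟨a⁻¹ * z, by simpa [norm_mul, ha] using hz, ?_⟩
    simp only [mul_inv_cancel_left₀ ha0, hw, inv_mul_cancel_left₀ ha0]

theorem Set.InjOn.inv_mul_comp_mul (ha : ‖a‖ = 1) (hinj : Set.InjOn h (ball 0 1)) :
    Set.InjOn (fun z => a⁻¹ * h (a * z)) (ball 0 1) := by
  have ha0 : a ≠ 0 := norm_ne_zero_iff.1 (by rw [ha]; exact one_ne_zero)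
  have hmem : ∀ y ∈ ball (0 : ℂ) 1, a * y ∈ ball (0 : ℂ) 1 := fun y hy => by
    simpa [norm_mul, ha] using hy
  intro z hz w hw hzw
  exact mul_left_cancel₀ ha0
    (hinj (hmem z hz) (hmem w hw) (mul_left_cancel₀ (inv_ne_zero ha0) hzw))

end rotation

theorem convexInDirection_of_add_mem {γ : ℝ} {D : Set ℂ}
    (hD : ∀ w ∈ D, ∀ t : ℝ, 0 ≤ t → w + t * exp (γ * I) ∈ D) : ConvexInDirection γ D := by
  intro b
  refine Set.OrdConnected.isPreconnected (IsUpperSet.ordConnected fun t₁ t₂ ht h₁ => ?_)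
  have := hD _ h₁ (t₂ - t₁) (sub_nonneg.2 ht)
  simp only [Set.mem_preimage, ofReal_sub] at this ⊢
  convert this using 1
  ring

noncomputable def koebeFamily (lam : ℝ) (z : ℂ) : ℂ := z / ((1 - z) * (1 - lam * z))

section koebeFamily

variable {lam : ℝ}

theorem hasDerivAt_koebeFamily {z : ℂ} (hz : 1 - z ≠ 0) (hlz : 1 - z * lam ≠ 0) :
    HasDerivAt (koebeFamily lam) ((1 - lam * z ^ 2) / ((1 - z) ^ 2 * (1 - lam * z) ^ 2)) z := by
  have hden := ((hasDerivAt_id' z).const_sub 1).fun_mul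
    (((hasDerivAt_id' z).const_mul (lam : ℂ)).const_sub 1)
  refine ((hasDerivAt_id' z).fun_div hden (mul_ne_zero hz (by rwa [mul_comm]))).congr_deriv ?_
  field_simp
  ring

theorem re_one_sub_mul_sq_div_sq_pos (h0 : 0 ≤ lam) (h1 : lam ≤ 1) {z : ℂ} (hz : ‖z‖ < 1) :
    0 < ((1 - lam * z ^ 2) / (1 - lam * z) ^ 2).re := by
  have hM := (isUnit_one_sub_of_norm_lt_one (norm_ofReal_mul_lt_one h0 h1 hz)).ne_zero
  have hnormSq : z.re ^ 2 + z.im ^ 2 < 1 := by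
    rw [← sq_lt_one_iff₀ (norm_nonneg z), Complex.sq_norm, normSq_apply] at hz
    nlinarith
  have hMpos : 0 < (1 - lam * z.re) ^ 2 + (lam * z.im) ^ 2 := by
    simpa [normSq_apply, sq] using normSq_pos.2 hM
  have hident : (1 - lam * z ^ 2).re * ((1 - lam * z) ^ 2).re +
      (1 - lam * z ^ 2).im * ((1 - lam * z) ^ 2).im =
      ((1 - lam * z.re) ^ 2 + (lam * z.im) ^ 2) * (1 - lam * (z.re ^ 2 + z.im ^ 2)) +
        2 * lam * (1 - lam) * z.im ^ 2 := by
    simp only [sq, sub_re, sub_im, mul_re, mul_im, one_re, one_im, ofReal_re, ofReal_im]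
    ring
  rw [div_re, ← add_div, hident]
  refine div_pos ?_ (normSq_pos.2 (pow_ne_zero 2 hM))
  have hfactor : 0 < 1 - lam * (z.re ^ 2 + z.im ^ 2) := by nlinarith
  have hrest : 0 ≤ 2 * lam * (1 - lam) * z.im ^ 2 := by
    have : 0 ≤ 1 - lam := by linarith
    positivity
  nlinarith [mul_pos hMpos hfactor]

theorem re_one_sub_sq_mul_deriv_koebeFamily_pos (h0 : 0 ≤ lam) (h1 : lam ≤ 1) {z : ℂ}
    (hz : ‖z‖ < 1) : 0 < ((1 - z) ^ 2 * deriv (koebeFamily lam) z).re := by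
  have hz1 := (isUnit_one_sub_of_norm_lt_one hz).ne_zero
  have hlz : 1 - z * lam ≠ 0 := by
    rw [mul_comm]; exact (isUnit_one_sub_of_norm_lt_one (norm_ofReal_mul_lt_one h0 h1 hz)).ne_zero
  rw [(hasDerivAt_koebeFamily hz1 hlz).deriv, mul_div_assoc',
    mul_div_mul_left _ _ (pow_ne_zero 2 hz1)]
  exact re_one_sub_mul_sq_div_sq_pos h0 h1 hz

theorem injOn_koebeFamily (h0 : 0 ≤ lam) (h1 : lam ≤ 1) :
    Set.InjOn (koebeFamily lam) (ball 0 1) := by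
  intro z hz w hw hzw
  rw [mem_ball_zero_iff] at hz hw
  have hden : ∀ y : ℂ, ‖y‖ < 1 → (1 - y) * (1 - lam * y) ≠ 0 := fun y hy =>
    mul_ne_zero (isUnit_one_sub_of_norm_lt_one hy).ne_zero
      (isUnit_one_sub_of_norm_lt_one (norm_ofReal_mul_lt_one h0 h1 hy)).ne_zero
  have hzw' : ‖(lam : ℂ) * (z * w)‖ < 1 := by
    refine norm_ofReal_mul_lt_one h0 h1 ?_
    rw [norm_mul]
    nlinarith [norm_nonneg z, norm_nonneg w]
  rw [koebeFamily, koebeFamily, div_eq_div_iff (hden z hz) (hden w hw)] at hzw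
  have key : (z - w) * (1 - lam * (z * w)) = 0 := by linear_combination hzw
  exact sub_eq_zero.1 ((mul_eq_zero.1 key).resolve_right
    (isUnit_one_sub_of_norm_lt_one hzw').ne_zero)

-- In the variable `u = (1 + z)/(1 - z)`, the equation `W = koebeFamily lam z` reads
-- `u² - 1 = 2W((1 - λ)u + 1 + λ)`.
theorem mem_image_koebeFamily_iff (h0 : 0 ≤ lam) (h1 : lam ≤ 1) (W : ℂ) :
    W ∈ koebeFamily lam '' ball 0 1 ↔ ∃ u : ℂ, 0 < u.re ∧
      (u - (1 - lam) * W) ^ 2 = (1 - lam) ^ 2 * W ^ 2 + 2 * (1 + lam) * W + 1 := by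
  constructor
  · rintro ⟨z, hz, rfl⟩
    rw [mem_ball_zero_iff] at hz
    have hz1 := (isUnit_one_sub_of_norm_lt_one hz).ne_zero
    have hlz : 1 - z * lam ≠ 0 := by
      rw [mul_comm]
      exact (isUnit_one_sub_of_norm_lt_one (norm_ofReal_mul_lt_one h0 h1 hz)).ne_zero
    refine ⟨(1 + z) / (1 - z), re_one_add_div_one_sub_pos hz, ?_⟩
    rw [koebeFamily]
    field_simp
    ring
  · rintro ⟨u, hu, hW⟩
    have hu1 : u + 1 ≠ 0 := fun h => by
      have := congrArg re h
      simp only [add_re, one_re, zero_re] at this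
      linarith
    have hlu : u + 1 - (u - 1) * lam ≠ 0 := fun h => by
      have := congrArg re h
      simp only [add_re, mul_re, sub_re, one_re, ofReal_re, sub_im, one_im, ofReal_im,
        zero_re] at this
      nlinarith
    refine ⟨(u - 1) / (u + 1), mem_ball_zero_iff.2 (norm_sub_one_div_add_one_lt_one hu), ?_⟩
    rw [koebeFamily]
    field_simp
    linear_combination hW

-- `koebeRegion lam` is the right-hand side of `exists_re_pos_sq_sub_eq_iff` for `β = (1 - λ)W`
-- and `D = (1 - λ)²W² + 2(1 + λ)W + 1`; `imagePoly` is `(D.im² - 4 β.re² (β.re² - D.re)) / 4`.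
def imagePoly (lam s c : ℝ) : ℝ :=
  (1 - lam) ^ 2 * s ^ 2 * (2 * (1 + lam) * s + 1) +
    (1 + lam) * c ^ 2 * (2 * (1 - lam) ^ 2 * s + (1 + lam))

def koebeRegion (lam : ℝ) : Set ℂ :=
  {W | 0 < (1 - lam) * W.re ∨ (1 - lam) ^ 2 * W.im ^ 2 < 2 * (1 + lam) * W.re + 1 ∨
    0 < imagePoly lam W.re W.im}

theorem image_koebeFamily_ball (h0 : 0 ≤ lam) (h1 : lam ≤ 1) :
    koebeFamily lam '' ball 0 1 = koebeRegion lam := by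
  ext W
  rw [mem_image_koebeFamily_iff h0 h1, exists_re_pos_sq_sub_eq_iff]
  have hβ : ((1 - lam : ℂ) * W).re = (1 - lam) * W.re := by simp
  have hre : ((1 - lam) ^ 2 * W ^ 2 + 2 * (1 + lam) * W + 1 : ℂ).re =
      (1 - lam) ^ 2 * (W.re ^ 2 - W.im ^ 2) + 2 * (1 + lam) * W.re + 1 := by
    simp [sq]
  have him : ((1 - lam) ^ 2 * W ^ 2 + 2 * (1 + lam) * W + 1 : ℂ).im =
      2 * W.im * ((1 - lam) ^ 2 * W.re + (1 + lam)) := by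
    simp [sq]; ring
  rw [hβ, hre, him]
  refine or_congr Iff.rfl (or_congr ?_ ?_)
  · constructor <;> intro h <;> linarith
  · unfold imagePoly
    constructor <;> intro h <;> linarith

theorem imagePoly_le_of_le {c s₁ s₂ : ℝ} (h0 : 0 ≤ lam) (hs : s₁ ≤ s₂)
    (hs₂ : 2 * (1 + lam) * s₂ + 1 ≤ 0) : imagePoly lam s₁ c ≤ imagePoly lam s₂ c := by
  have hs₁ : 2 * (1 + lam) * s₁ + 1 ≤ 0 := by nlinarith
  have hs₂neg : s₂ ≤ 0 := by nlinarith
  have hs₁neg : s₁ ≤ 0 := hs.trans hs₂neg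
  have hbracket : 0 ≤ s₁ * (2 * (1 + lam) * s₁ + 1) + s₂ * (2 * (1 + lam) * s₂ + 1) +
      2 * (1 + lam) * (s₁ * s₂) + 2 * (1 + lam) * c ^ 2 := by
    have := mul_nonneg_of_nonpos_of_nonpos hs₁neg hs₁
    have := mul_nonneg_of_nonpos_of_nonpos hs₂neg hs₂
    have := mul_nonneg_of_nonpos_of_nonpos hs₁neg hs₂neg
    positivity
  have hdiff : imagePoly lam s₂ c - imagePoly lam s₁ c = (s₂ - s₁) * (1 - lam) ^ 2 *
      (s₁ * (2 * (1 + lam) * s₁ + 1) + s₂ * (2 * (1 + lam) * s₂ + 1) +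
      2 * (1 + lam) * (s₁ * s₂) + 2 * (1 + lam) * c ^ 2) := by
    unfold imagePoly; ring
  nlinarith [mul_nonneg (mul_nonneg (sub_nonneg.2 hs) (sq_nonneg (1 - lam))) hbracket]

-- `imagePoly` increases with `s` as long as `2(1 + λ)s + 1 ≤ 0`; beyond that point both of its
-- terms are positive, unless `c = 0`, where the second condition of `koebeRegion` holds.
theorem add_ofReal_mem_koebeRegion (h0 : 0 ≤ lam) (h1 : lam ≤ 1) {W : ℂ}
    (hW : W ∈ koebeRegion lam) {t : ℝ} (ht : 0 ≤ t) : W + t ∈ koebeRegion lam := by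
  simp only [koebeRegion, Set.mem_ofPred_eq, add_re, ofReal_re, add_im, ofReal_im,
    add_zero] at hW ⊢
  set s := W.re
  set c := W.im
  rcases hW with h | h | h
  · exact Or.inl (by nlinarith)
  · exact Or.inr (Or.inl (by nlinarith))
  right
  rcases le_or_gt (2 * (1 + lam) * (s + t) + 1) 0 with hp | hp
  · exact Or.inr (h.trans_le (imagePoly_le_of_le h0 (by linarith) hp))
  rcases eq_or_ne c 0 with hc | hc
  · left; simpa [hc] using hp
  right
  have hq : 0 < 2 * (1 - lam) ^ 2 * (s + t) + (1 + lam) := by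
    rcases le_or_gt 0 (s + t) with hst | hst
    · positivity
    · nlinarith [mul_nonneg (mul_nonneg h0 (by linarith : (0 : ℝ) ≤ 3 - lam)) (neg_nonneg.2 hst.le)]
  have hfirst : 0 ≤ (1 - lam) ^ 2 * (s + t) ^ 2 * (2 * (1 + lam) * (s + t) + 1) := by positivity
  have hsecond : 0 < (1 + lam) * c ^ 2 * (2 * (1 - lam) ^ 2 * (s + t) + (1 + lam)) := by
    have := sq_pos_of_ne_zero hc
    positivity
  unfold imagePoly
  linarith

end koebeFamily

theorem stmt_3_general (lam θ : ℝ) (hlam : lam ∈ Set.Ioc (0 : ℝ) 1) (f : ℂ → ℂ)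
    (hf : ∀ z, f z = z / ((1 - Complex.exp ((θ : ℂ) * Complex.I) * z) *
      (1 - (lam : ℂ) * Complex.exp ((θ : ℂ) * Complex.I) * z))) :
    (∀ z ∈ ball (0 : ℂ) 1,
      0 < ((1 - Complex.exp ((θ : ℂ) * Complex.I) * z) ^ 2 * deriv f z).re) ∧
    Set.InjOn f (ball (0 : ℂ) 1) ∧
    ConvexInDirection (2 * Real.pi - θ) (f '' ball (0 : ℂ) 1) := by
  obtain ⟨h0, h1⟩ := hlam
  set a := exp (θ * I)
  have ha : ‖a‖ = 1 := norm_exp_ofReal_mul_I θ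
  have ha0 : a ≠ 0 := exp_ne_zero _
  obtain rfl : f = fun z => a⁻¹ * koebeFamily lam (a * z) := funext fun z => by
    rw [hf, koebeFamily, mul_div_assoc', inv_mul_cancel_left₀ ha0, mul_assoc]
  have hdir : exp (↑(2 * Real.pi - θ) * I) = a⁻¹ := by
    rw [← exp_neg, show (↑(2 * Real.pi - θ) : ℂ) * I = -(θ * I) + 2 * Real.pi * I by
      push_cast; ring, exp_add, exp_two_pi_mul_I, mul_one]
  refine ⟨fun z hz => ?_, (injOn_koebeFamily h0.le h1).inv_mul_comp_mul ha, ?_⟩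
  · rw [deriv_inv_mul_comp_mul ha0]
    exact re_one_sub_sq_mul_deriv_koebeFamily_pos h0.le h1 (by simpa [norm_mul, ha] using hz)
  · refine convexInDirection_of_add_mem fun w hw t ht => ?_
    rw [hdir, mem_image_inv_mul_comp_mul_ball ha, image_koebeFamily_ball h0.le h1] at *
    rw [mul_add, mul_left_comm, mul_inv_cancel₀ ha0, mul_one]
    exact add_ofReal_mem_koebeRegion h0.le h1 hw ht

/-- For `λ ∈ (0,1]`, `θ ∈ [0,2π)` and `f_θ(z) = z/((1 − e^{iθ}z)(1 − λe^{iθ}z))`,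
the quantity `Re((1 − e^{iθ}z)² f_θ'(z))` is positive on the unit disk; consequently
`f_θ` is (univalent and) convex in the direction `2π − θ`. -/
theorem stmt_3 (lam θ : ℝ) (hlam : lam ∈ Set.Ioc (0 : ℝ) 1)
    (hθ : θ ∈ Set.Ico (0 : ℝ) (2 * Real.pi)) (f : ℂ → ℂ)
    (hf : ∀ z, f z = z / ((1 - Complex.exp ((θ : ℂ) * Complex.I) * z) *
      (1 - (lam : ℂ) * Complex.exp ((θ : ℂ) * Complex.I) * z))) :
    (∀ z ∈ ball (0 : ℂ) 1,
      0 < ((1 - Complex.exp ((θ : ℂ) * Complex.I) * z) ^ 2 * deriv f z).re) ∧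
    Set.InjOn f (ball (0 : ℂ) 1) ∧
    ConvexInDirection (2 * Real.pi - θ) (f '' ball (0 : ℂ) 1) :=
  stmt_3_general lam θ hlam f hf
end

section
/- For λ ∈ (0,1], p ∈ (0,1], and every s on the unit circle |s| = 1, the real part of (1 − λps²)(1 + s²)/(1 + λps²)² equals (1−λp)·[1 + 4λp + λ²p² + (1+λp)²·Re(s²) − 2λp·(Re(s²))²]/|1 + λps²|⁴ and is nonnegative. -/
open Complex ComplexConjugate

/-!
Multiplying numerator and denominator by `conj (1 + a z)²`, with `z = s²` and `a = λp`, turns the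
real part into `Re((1 - a z)(1 + z) conj(1 + a z)²) / |1 + a z|⁴`. On the unit circle
`|z|² = 1` reduces that numerator to a polynomial in `x = Re z`, which factors as
`(1 - a)(1 + x)(1 + 4a + a² - 2a x)`; each factor is nonnegative for `a ∈ [0, 1]`, `x ∈ [-1, 1]`.
-/

theorem Complex.re_div_eq_re_mul_conj_div_normSq (u v : ℂ) :
    (u / v).re = (u * conj v).re / normSq v := by
  rw [div_re, mul_re, conj_re, conj_im]
  ring

theorem re_mul_conj_sq_of_normSq_eq_one (a : ℝ) {z : ℂ} (hz : normSq z = 1) :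
    ((1 - a * z) * (1 + z) * conj (1 + a * z) ^ 2).re =
      (1 - a) * (1 + 4 * a + a ^ 2 + (1 + a) ^ 2 * z.re - 2 * a * z.re ^ 2) := by
  rw [normSq_apply] at hz
  simp only [mul_re, mul_im, add_re, add_im, sub_re, sub_im, one_re, one_im, ofReal_re,
    ofReal_im, conj_re, conj_im, map_add, map_mul, map_one, conj_ofReal, pow_two]
  linear_combination (3 * a - 3 * a ^ 2 - a ^ 2 * z.re - a ^ 3 - a ^ 3 * z.re
    - a ^ 3 * (z.re ^ 2 + z.im ^ 2)) * hz

theorem re_div_sq_of_norm_eq_one (a : ℝ) {z : ℂ} (hz : ‖z‖ = 1) :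
    ((1 - a * z) * (1 + z) / (1 + a * z) ^ 2).re =
      (1 - a) * (1 + 4 * a + a ^ 2 + (1 + a) ^ 2 * z.re - 2 * a * z.re ^ 2) /
        ‖1 + (a : ℂ) * z‖ ^ 4 := by
  have hz' : normSq z = 1 := by rw [← Complex.sq_norm, hz, one_pow]
  rw [re_div_eq_re_mul_conj_div_normSq, map_pow, re_mul_conj_sq_of_normSq_eq_one a hz', map_pow,
    ← Complex.sq_norm, ← pow_mul]

theorem numerator_nonneg_of_abs_le_one {a x : ℝ} (ha₀ : 0 ≤ a) (ha₁ : a ≤ 1) (hx : |x| ≤ 1) :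
    0 ≤ (1 - a) * (1 + 4 * a + a ^ 2 + (1 + a) ^ 2 * x - 2 * a * x ^ 2) := by
  obtain ⟨hx₀, hx₁⟩ := abs_le.mp hx
  have hfactor : 1 + 4 * a + a ^ 2 + (1 + a) ^ 2 * x - 2 * a * x ^ 2 =
      (1 + x) * (1 + 4 * a + a ^ 2 - 2 * a * x) := by ring
  rw [hfactor]
  have hlinear : 0 ≤ 1 + 4 * a + a ^ 2 - 2 * a * x := by nlinarith
  exact mul_nonneg (by linarith) (mul_nonneg (by linarith) hlinear)

/-- For `λ, p ∈ (0,1]` and `|s| = 1`, the real part of `(1 − λps²)(1 + s²)/(1 + λps²)²`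
equals the stated expression and is nonnegative. -/
theorem stmt_4 (lam p : ℝ) (hlam : lam ∈ Set.Ioc (0 : ℝ) 1) (hp : p ∈ Set.Ioc (0 : ℝ) 1) :
    ∀ s : ℂ, ‖s‖ = 1 →
      (((1 - (lam : ℂ) * (p : ℂ) * s ^ 2) * (1 + s ^ 2) /
          (1 + (lam : ℂ) * (p : ℂ) * s ^ 2) ^ 2).re =
        (1 - lam * p) * (1 + 4 * lam * p + lam ^ 2 * p ^ 2 +
            (1 + lam * p) ^ 2 * (s ^ 2).re - 2 * lam * p * ((s ^ 2).re) ^ 2) /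
          ‖1 + (lam : ℂ) * (p : ℂ) * s ^ 2‖ ^ 4) ∧
      0 ≤ ((1 - (lam : ℂ) * (p : ℂ) * s ^ 2) * (1 + s ^ 2) /
          (1 + (lam : ℂ) * (p : ℂ) * s ^ 2) ^ 2).re := by
  intro s hs
  have hs2 : ‖s ^ 2‖ = 1 := by rw [norm_pow, hs, one_pow]
  have hre := re_div_sq_of_norm_eq_one (lam * p) hs2
  push_cast at hre
  refine ⟨by rw [hre]; ring, hre ▸ div_nonneg ?_ (by positivity)⟩
  exact numerator_nonneg_of_abs_le_one (mul_nonneg hlam.1.le hp.1.le)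
    (mul_le_one₀ hlam.2 hp.1.le hp.2) (hs2 ▸ abs_re_le_norm _)
end

section
/- Let w(a) = 2v(a) − a where v(a) = 1/a − ((1 − a²)/a²)log(1+a) (with v(0) := 1/2). Then w is strictly concave on [0,1]; moreover, since w(0) = w(1) = 1 (using v(1) = 1, so that w(1) = 2·1 − 1 = 1), it follows that w(a) > 1 for all a ∈ (0,1). -/
open Real Set Filter Topology


private lemma hlog_deriv (x : ℝ) (hx : (1:ℝ) + x ≠ 0) :
    HasDerivAt (fun a : ℝ => Real.log (1 + a)) (1 / (1 + x)) x :=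
  ((hasDerivAt_id x).const_add 1).log hx

/-- log lower bound: x - x²/2 < log(1+x) for x > 0 -/
private lemma log_lb {x : ℝ} (hx : 0 < x) : x - x ^ 2 / 2 < Real.log (1 + x) := by
  set h : ℝ → ℝ := fun a => Real.log (1 + a) - a + a ^ 2 / 2 with hh
  have hd : ∀ y : ℝ, 0 ≤ y → HasDerivAt h (y ^ 2 / (1 + y)) y := by
    intro y hy
    have h1 : (1:ℝ) + y ≠ 0 := by positivity
    have : HasDerivAt h (1 / (1 + y) - 1 + 2 * y ^ 1 / 2) y := by
      exact (((hlog_deriv y h1).sub (hasDerivAt_id y)).add ((hasDerivAt_pow 2 y).div_const 2))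
    convert this using 1
    field_simp
    ring
  have hmono : StrictMonoOn h (Ici (0:ℝ)) := by
    apply strictMonoOn_of_deriv_pos (convex_Ici 0)
    · exact fun y hy => (hd y hy).continuousAt.continuousWithinAt
    · intro y hy
      rw [interior_Ici] at hy
      have hy' : (0:ℝ) < y := hy
      rw [(hd y (le_of_lt hy')).deriv]
      positivity
  have := hmono (self_mem_Ici) (le_of_lt hx : (0:ℝ) ≤ x) hx
  simp only [hh] at this
  simp at this
  linarith

/-- log upper bound: log(1+x) ≤ x - x²/2 + x³/2 for x ≥ 0 -/
private lemma log_ub {x : ℝ} (hx : 0 ≤ x) : Real.log (1 + x) ≤ x - x ^ 2 / 2 + x ^ 3 / 2 := by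
  set k : ℝ → ℝ := fun a => a - a ^ 2 / 2 + a ^ 3 / 2 - Real.log (1 + a) with hk
  have hd : ∀ y : ℝ, 0 ≤ y → HasDerivAt k ((y ^ 2 / 2 + 3 * y ^ 3 / 2) / (1 + y)) y := by
    intro y hy
    have h1 : (1:ℝ) + y ≠ 0 := by positivity
    have : HasDerivAt k (1 - 2 * y ^ 1 / 2 + 3 * y ^ 2 / 2 - 1 / (1 + y)) y := by
      exact (((hasDerivAt_id y).sub ((hasDerivAt_pow 2 y).div_const 2)).add
        ((hasDerivAt_pow 3 y).div_const 2)).sub (hlog_deriv y h1)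
    convert this using 1
    field_simp
    ring
  have hmono : StrictMonoOn k (Ici (0:ℝ)) := by
    apply strictMonoOn_of_deriv_pos (convex_Ici 0)
    · exact fun y hy => (hd y hy).continuousAt.continuousWithinAt
    · intro y hy
      rw [interior_Ici] at hy
      have hy' : (0:ℝ) < y := hy
      rw [(hd y (le_of_lt hy')).deriv]
      positivity
  rcases eq_or_lt_of_le hx with rfl | hx'
  · simp
  · have := hmono (self_mem_Ici) (le_of_lt hx' : (0:ℝ) ≤ x) hx'
    simp only [hk] at this
    simp at this
    linarith

/-- key: 6x + 3x² - x³ < 6(1+x)log(1+x) for x > 0 -/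
private lemma g_neg {x : ℝ} (hx : 0 < x) :
    6 * x + 3 * x ^ 2 - x ^ 3 < 6 * (1 + x) * Real.log (1 + x) := by
  set g : ℝ → ℝ := fun a => 6 * a + 3 * a ^ 2 - a ^ 3 - 6 * (1 + a) * Real.log (1 + a) with hg
  have hd : ∀ y : ℝ, 0 ≤ y →
      HasDerivAt g (6 * y - 3 * y ^ 2 - 6 * Real.log (1 + y)) y := by
    intro y hy
    have h1 : (1:ℝ) + y ≠ 0 := by positivity
    have : HasDerivAt g ((6 * 1 + 3 * (2 * y ^ 1) - 3 * y ^ 2) -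
        (6 * 1 * Real.log (1 + y) + 6 * (1 + y) * (1 / (1 + y)))) y := by
      exact ((((hasDerivAt_id y).const_mul 6).add ((hasDerivAt_pow 2 y).const_mul 3)).sub
        (hasDerivAt_pow 3 y)).sub
        ((((hasDerivAt_id y).const_add 1).const_mul 6).mul (hlog_deriv y h1))
    convert this using 1
    field_simp
    ring
  have hanti : StrictAntiOn g (Ici (0:ℝ)) := by
    apply strictAntiOn_of_deriv_neg (convex_Ici 0)
    · exact fun y hy => (hd y hy).continuousAt.continuousWithinAt
    · intro y hy
      rw [interior_Ici] at hy
      rw [(hd y (le_of_lt hy)).deriv]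
      have := log_lb hy
      linarith
  have := hanti (self_mem_Ici) (le_of_lt hx : (0:ℝ) ≤ x) hx
  simp only [hg] at this
  simp at this
  linarith


noncomputable def stmt9_d1 (a : ℝ) : ℝ := 2 * ((a - 2) / a ^ 2 + 2 * Real.log (1 + a) / a ^ 3) - 1

noncomputable def stmt9_d2 (a : ℝ) : ℝ :=
  2 * ((4 - a) / a ^ 3 + 2 / (a ^ 3 * (1 + a)) - 6 * Real.log (1 + a) / a ^ 4)

private lemma hlog_deriv' (x : ℝ) (hx : (1:ℝ) + x ≠ 0) :
    HasDerivAt (fun a : ℝ => Real.log (1 + a)) (1 / (1 + x)) x :=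
  ((hasDerivAt_id x).const_add 1).log hx

private lemma hasDerivAt_F {x : ℝ} (hx : 0 < x) :
    HasDerivAt (fun a : ℝ => 2 * (1 / a - ((1 - a ^ 2) / a ^ 2) * Real.log (1 + a)) - a)
      (stmt9_d1 x) x := by
  have h1 : (1:ℝ) + x ≠ 0 := by positivity
  have hx0 : x ≠ 0 := hx.ne'
  have hx2 : x ^ 2 ≠ 0 := pow_ne_zero 2 hx0
  have p1 : HasDerivAt (fun a : ℝ => 1 / a) ((0 * x - 1 * 1) / x ^ 2) x :=
    (hasDerivAt_const x 1).div (hasDerivAt_id x) hx0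
  have p2 : HasDerivAt (fun a : ℝ => (1 - a ^ 2) / a ^ 2)
      (((0 - 2 * x ^ 1) * x ^ 2 - (1 - x ^ 2) * (2 * x ^ 1)) / (x ^ 2) ^ 2) x :=
    ((hasDerivAt_const x 1).sub (hasDerivAt_pow 2 x)).div (hasDerivAt_pow 2 x) hx2
  have p5 := ((p1.sub (p2.mul (hlog_deriv' x h1))).const_mul 2).sub (hasDerivAt_id x)
  refine p5.congr_deriv ?_
  rw [stmt9_d1]
  field_simp
  ring

private lemma hasDerivAt_d1 {x : ℝ} (hx : 0 < x) :
    HasDerivAt stmt9_d1 (stmt9_d2 x) x := by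
  have h1 : (1:ℝ) + x ≠ 0 := by positivity
  have hx0 : x ≠ 0 := hx.ne'
  have hx2 : x ^ 2 ≠ 0 := pow_ne_zero 2 hx0
  have hx3 : x ^ 3 ≠ 0 := pow_ne_zero 3 hx0
  have q1 : HasDerivAt (fun a : ℝ => (a - 2) / a ^ 2)
      ((1 * x ^ 2 - (x - 2) * (2 * x ^ 1)) / (x ^ 2) ^ 2) x :=
    ((hasDerivAt_id x).sub_const 2).div (hasDerivAt_pow 2 x) hx2
  have q2 : HasDerivAt (fun a : ℝ => 2 * Real.log (1 + a) / a ^ 3)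
      ((2 * (1 / (1 + x)) * x ^ 3 - 2 * Real.log (1 + x) * (3 * x ^ 2)) / (x ^ 3) ^ 2) x :=
    (((hlog_deriv' x h1).const_mul 2).div (hasDerivAt_pow 3 x) hx3)
  have q := ((q1.add q2).const_mul 2).sub_const 1
  refine q.congr_deriv ?_
  rw [stmt9_d2]
  field_simp
  ring

private lemma d2_neg {x : ℝ} (hx : 0 < x)
    (hg : 6 * x + 3 * x ^ 2 - x ^ 3 < 6 * (1 + x) * Real.log (1 + x)) : stmt9_d2 x < 0 := by
  have h1 : (0:ℝ) < 1 + x := by positivity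
  have : stmt9_d2 x =
      2 * ((6 * x + 3 * x ^ 2 - x ^ 3) - 6 * (1 + x) * Real.log (1 + x)) / (x ^ 4 * (1 + x)) := by
    rw [stmt9_d2]
    field_simp
    ring
  rw [this]
  apply div_neg_of_neg_of_pos
  · linarith
  · positivity


/-- With `v(a) = 1/a − ((1−a²)/a²)log(1+a)` (and `v(0) = 1/2`), the function
`w(a) = 2v(a) − a` is strictly concave on `[0,1]`, satisfies `w(0) = w(1) = 1`, and hence
`w(a) > 1` for `a ∈ (0,1)`. -/
theorem stmt_9 (v w : ℝ → ℝ)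
    (hv0 : v 0 = 1 / 2)
    (hv : ∀ a : ℝ, a ≠ 0 → v a = 1 / a - ((1 - a ^ 2) / a ^ 2) * Real.log (1 + a))
    (hw : ∀ a, w a = 2 * v a - a) :
    StrictConcaveOn ℝ (Set.Icc (0 : ℝ) 1) w ∧ w 0 = 1 ∧ w 1 = 1 ∧
    ∀ a ∈ Set.Ioo (0 : ℝ) 1, 1 < w a := by
  have hw0 : w 0 = 1 := by rw [hw, hv0]; norm_num
  have hw1 : w 1 = 1 := by rw [hw, hv 1 one_ne_zero]; norm_num
  -- w has derivative d1 at every positive point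
  have hFd : ∀ x : ℝ, 0 < x → HasDerivAt w (stmt9_d1 x) x := by
    intro x hx
    apply (hasDerivAt_F hx).congr_of_eventuallyEq
    filter_upwards [eventually_ne_nhds hx.ne'] with a ha
    rw [hw, hv a ha]
  -- continuity on Icc
  have hcont : ContinuousOn w (Icc (0:ℝ) 1) := by
    intro x hx
    rcases eq_or_ne x 0 with rfl | hx0
    · -- continuity at 0 from the right
      have hT : Tendsto w (𝓝[>] (0:ℝ)) (𝓝 1) := by
        have hphi : Tendsto (fun a : ℝ => 2 * (a - Real.log (1 + a)) / a ^ 2)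
            (𝓝[>] (0:ℝ)) (𝓝 1) := by
          apply tendsto_of_tendsto_of_tendsto_of_le_of_le'
            (g := fun a : ℝ => 1 - a) (h := fun _ : ℝ => (1:ℝ))
          · have h1 : Tendsto (fun a : ℝ => 1 - a) (𝓝 (0:ℝ)) (𝓝 1) := by
              have hc : Continuous (fun a : ℝ => 1 - a) := by fun_prop
              have := hc.tendsto (0:ℝ)
              simpa using this
            exact h1.mono_left nhdsWithin_le_nhds
          · exact tendsto_const_nhds
          · filter_upwards [self_mem_nhdsWithin] with a (ha : 0 < a)
            have h2 := log_ub (le_of_lt ha)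
            rw [le_div_iff₀ (by positivity : (0:ℝ) < a ^ 2)]
            nlinarith
          · filter_upwards [self_mem_nhdsWithin] with a (ha : 0 < a)
            have h2 := log_lb ha
            rw [div_le_one (by positivity : (0:ℝ) < a ^ 2)]
            nlinarith
        have hpsi : Tendsto (fun a : ℝ => 2 * Real.log (1 + a) - a) (𝓝[>] (0:ℝ)) (𝓝 0) := by
          have hc : ContinuousAt (fun a : ℝ => 2 * Real.log (1 + a) - a) 0 := by
            have hl : ContinuousAt (fun a : ℝ => Real.log (1 + a)) 0 := by
              have := (Real.continuousAt_log (by norm_num : (1:ℝ) + 0 ≠ 0)).comp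
                (by fun_prop : ContinuousAt (fun a : ℝ => 1 + a) 0)
              exact this
            exact (continuousAt_const.mul hl).sub continuousAt_id
          have := hc.tendsto.mono_left (nhdsWithin_le_nhds (s := Ioi (0:ℝ)))
          simpa using this
        have hsum := hphi.add hpsi
        rw [add_zero] at hsum
        apply hsum.congr'
        filter_upwards [self_mem_nhdsWithin] with a (ha : 0 < a)
        rw [hw, hv a ha.ne']
        field_simp
        ring
      have hsub : Icc (0:ℝ) 1 ⊆ insert 0 (Ioi 0) := by
        intro y hy
        rcases eq_or_lt_of_le hy.1 with h | h
        · exact Or.inl h.symm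
        · exact Or.inr h
      unfold ContinuousWithinAt
      rw [hw0]
      apply Tendsto.mono_left _ (nhdsWithin_mono 0 hsub)
      rw [nhdsWithin_insert, tendsto_sup]
      refine ⟨?_, hT⟩
      have := tendsto_pure_nhds w 0
      rwa [hw0] at this
    · have hx' : 0 < x := lt_of_le_of_ne hx.1 (Ne.symm hx0)
      exact ((hFd x hx').continuousAt).continuousWithinAt
  -- second derivative negative on interior
  have hdd : ∀ x ∈ interior (Icc (0:ℝ) 1), deriv^[2] w x < 0 := by
    rw [interior_Icc]
    intro x hx
    have hdw : deriv w =ᶠ[𝓝 x] stmt9_d1 := by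
      filter_upwards [eventually_gt_nhds hx.1] with a ha
      exact (hFd a ha).deriv
    have h2 : HasDerivAt (deriv w) (stmt9_d2 x) x :=
      (hasDerivAt_d1 hx.1).congr_of_eventuallyEq hdw
    show deriv (deriv w) x < 0
    rw [h2.deriv]
    exact d2_neg hx.1 (g_neg hx.1)
  have hsc : StrictConcaveOn ℝ (Icc (0:ℝ) 1) w :=
    strictConcaveOn_of_deriv2_neg (convex_Icc 0 1) hcont hdd
  refine ⟨hsc, hw0, hw1, ?_⟩
  intro a ha
  have h := hsc.2 (show (0:ℝ) ∈ Icc (0:ℝ) 1 by simp) (show (1:ℝ) ∈ Icc (0:ℝ) 1 by simp)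
    (by norm_num) (by linarith [ha.2] : (0:ℝ) < 1 - a) ha.1 (by ring)
  simp only [smul_eq_mul, mul_zero, mul_one, add_zero, zero_add, hw0, hw1] at h
  linarith
end

section
/- Let v(a) = 1/a − ((1−a²)/a²)·log(1+a) on (0,1] with v(0) = 1/2. Then v is strictly increasing on [0,1], with v'(a) > v'(1) = 2·log 2 − 1 > 0 for a ∈ [0,1), and 1/2 ≤ v(a) ≤ 1 for all a ∈ [0,1]. -/
/-!
For `a > 0` one computes `v'(a) = q(a) / a³` with `q(a) = a² − 2a + 2 log(1 + a)`.
Since `q(0) = 0` and `q'(a) = 2a² / (1 + a) > 0`, `q` is positive, so `v` increases.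
The quotient `q(a) / a³` has derivative `(a q'(a) − 3 q(a)) / a⁴`, and the numerator vanishes
at `0` with derivative `−2a³ / (1 + a)² < 0`; so `v'` decreases on `(0, 1]` down to
`v'(1) = 2 log 2 − 1`. At `0`, the cubic Taylor polynomial of `log(1 + a)` gives
`v(a) = 1/2 + 2a/3 + O(a²)`, hence `v'(0) = 2/3 > 2 log 2 − 1`.
-/

open Set Filter Real Topology Asymptotics

lemma pos_of_map_zero_of_hasDerivAt_pos {f f' : ℝ → ℝ} (h0 : f 0 = 0)
    (hf : ∀ x, 0 ≤ x → HasDerivAt f (f' x) x) (hf' : ∀ x, 0 < x → 0 < f' x)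
    {a : ℝ} (ha : 0 < a) : 0 < f a := by
  have hmono : StrictMonoOn f (Ici 0) := by
    refine strictMonoOn_of_hasDerivWithinAt_pos (convex_Ici 0)
      (fun x hx => (hf x hx).continuousAt.continuousWithinAt)
      (fun x hx => (hf x (interior_subset hx)).hasDerivWithinAt) ?_
    rw [interior_Ici]
    exact hf'
  simpa [h0] using hmono (mem_Ici.2 le_rfl) ha.le ha

lemma hasDerivAt_log_one_add {x : ℝ} (hx : 1 + x ≠ 0) :
    HasDerivAt (fun a => log (1 + a)) (1 / (1 + x)) x := by
  simpa using ((hasDerivAt_id x).const_add 1).log hx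

lemma abs_log_one_add_sub_taylor_le {x : ℝ} (hx : |x| ≤ 1 / 2) :
    |log (1 + x) - (x - x ^ 2 / 2 + x ^ 3 / 3)| ≤ 2 * x ^ 4 := by
  have h := Real.abs_log_sub_add_sum_range_le (x := -x) (by rw [abs_neg]; linarith) 3
  norm_num [Finset.sum_range_succ] at h
  calc |log (1 + x) - (x - x ^ 2 / 2 + x ^ 3 / 3)|
      = |-x + x ^ 2 / 2 + (-x) ^ 3 / 3 + log (1 + x)| := by ring_nf
    _ ≤ |x| ^ 4 / (1 - |x|) := h
    _ ≤ 2 * x ^ 4 := by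
        rw [pow_abs, abs_of_nonneg (by positivity), div_le_iff₀ (by linarith)]
        nlinarith [abs_nonneg x, pow_nonneg (sq_nonneg x) 2]

noncomputable def q (a : ℝ) : ℝ := a ^ 2 - 2 * a + 2 * log (1 + a)

lemma hasDerivAt_q {x : ℝ} (hx : 1 + x ≠ 0) : HasDerivAt q (2 * x ^ 2 / (1 + x)) x := by
  have h := ((hasDerivAt_pow 2 x).sub ((hasDerivAt_id x).const_mul 2)).add
    ((hasDerivAt_log_one_add hx).const_mul 2)
  refine h.congr_deriv ?_
  field_simp
  ring

lemma q_pos {a : ℝ} (ha : 0 < a) : 0 < q a :=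
  pos_of_map_zero_of_hasDerivAt_pos (by simp [q]) (fun x hx => hasDerivAt_q (by linarith))
    (fun x hx => by positivity) ha

lemma mul_deriv_q_lt_three_mul_q {a : ℝ} (ha : 0 < a) : 2 * a ^ 3 / (1 + a) < 3 * q a := by
  have hk : ∀ x, 0 ≤ x → HasDerivAt (fun a => 3 * q a - 2 * a ^ 3 / (1 + a))
      (2 * x ^ 3 / (1 + x) ^ 2) x := by
    intro x hx
    have h1x : 1 + x ≠ 0 := by linarith
    have h := ((hasDerivAt_q h1x).const_mul 3).sub
      (((hasDerivAt_pow 3 x).const_mul 2).div ((hasDerivAt_id' x).const_add 1) h1x)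
    refine h.congr_deriv ?_
    field_simp
    ring
  linarith [pos_of_map_zero_of_hasDerivAt_pos (by simp [q]) hk (fun x hx => by positivity) ha]

lemma strictAntiOn_q_div_pow_three : StrictAntiOn (fun a => q a / a ^ 3) (Ioi 0) := by
  have hd : ∀ x ∈ Ioi (0 : ℝ), HasDerivAt (fun a => q a / a ^ 3)
      ((2 * x ^ 3 / (1 + x) - 3 * q x) / x ^ 4) x := by
    intro x (hx : 0 < x)
    have h := (hasDerivAt_q (x := x) (by linarith)).div (hasDerivAt_pow 3 x) (by positivity)
    refine h.congr_deriv ?_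
    field_simp
    ring
  refine strictAntiOn_of_hasDerivWithinAt_neg (convex_Ioi 0)
    (f' := fun x => (2 * x ^ 3 / (1 + x) - 3 * q x) / x ^ 4)
    (fun x hx => (hd x hx).continuousAt.continuousWithinAt) ?_ ?_
  · rw [interior_Ioi]
    exact fun x hx => (hd x hx).hasDerivWithinAt
  · rw [interior_Ioi]
    intro x (hx : 0 < x)
    exact div_neg_of_neg_of_pos (by linarith [mul_deriv_q_lt_three_mul_q hx]) (by positivity)

section

variable {v : ℝ → ℝ}

lemma hasDerivAt_v_of_ne_zero
    (hv : ∀ a : ℝ, a ≠ 0 → v a = 1 / a - ((1 - a ^ 2) / a ^ 2) * log (1 + a))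
    {a : ℝ} (ha : a ≠ 0) (h1a : 1 + a ≠ 0) : HasDerivAt v (q a / a ^ 3) a := by
  have h := (hasDerivAt_inv ha).sub ((((hasDerivAt_pow 2 a).const_sub 1).div
    (hasDerivAt_pow 2 a) (pow_ne_zero 2 ha)).mul (hasDerivAt_log_one_add h1a))
  refine (h.congr_deriv ?_).congr_of_eventuallyEq ?_
  · simp only [q, Pi.div_apply]
    field_simp
    ring
  · filter_upwards [eventually_ne_nhds ha] with x hx
    rw [hv x hx]
    simp [one_div]

lemma abs_v_sub_linear_le (hv0 : v 0 = 1 / 2)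
    (hv : ∀ a : ℝ, a ≠ 0 → v a = 1 / a - ((1 - a ^ 2) / a ^ 2) * log (1 + a))
    {x : ℝ} (hx : |x| ≤ 1 / 2) : |v x - 1 / 2 - 2 / 3 * x| ≤ 3 * x ^ 2 := by
  rcases eq_or_ne x 0 with rfl | hx0
  · simp [hv0]
  set E := log (1 + x) - (x - x ^ 2 / 2 + x ^ 3 / 3) with hE_def
  have hE : |E| ≤ 2 * x ^ 4 := abs_log_one_add_sub_taylor_le hx
  have hsplit :
      v x - 1 / 2 - 2 / 3 * x = -x ^ 2 / 2 + x ^ 3 / 3 - (1 - x ^ 2) * (E / x ^ 2) := by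
    rw [hv x hx0, show log (1 + x) = x - x ^ 2 / 2 + x ^ 3 / 3 + E by rw [hE_def]; ring]
    field_simp
    ring
  have hx2 : x ^ 2 ≤ 1 / 4 := by nlinarith [sq_abs x, abs_nonneg x]
  have hx3 : |x ^ 3| ≤ x ^ 2 / 2 := by
    rw [pow_succ, abs_mul, abs_of_nonneg (sq_nonneg x)]
    nlinarith [sq_nonneg x]
  have hEx : |E / x ^ 2| ≤ 2 * x ^ 2 := by
    have hxx : 0 < x ^ 2 := pow_two_pos_of_ne_zero hx0
    rw [abs_div, abs_of_pos hxx, div_le_iff₀ hxx]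
    linarith [show x ^ 4 = x ^ 2 * x ^ 2 by ring]
  have h1x : |1 - x ^ 2| ≤ 1 := abs_le.mpr ⟨by nlinarith, by nlinarith⟩
  have hprod : |(1 - x ^ 2) * (E / x ^ 2)| ≤ 2 * x ^ 2 := by
    rw [abs_mul]
    nlinarith [abs_nonneg (1 - x ^ 2), abs_nonneg (E / x ^ 2)]
  obtain ⟨hx3l, hx3u⟩ := abs_le.mp hx3
  obtain ⟨hprodl, hprodu⟩ := abs_le.mp hprod
  rw [hsplit]
  exact abs_le.mpr ⟨by nlinarith, by nlinarith⟩

lemma hasDerivAt_v_zero (hv0 : v 0 = 1 / 2)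
    (hv : ∀ a : ℝ, a ≠ 0 → v a = 1 / a - ((1 - a ^ 2) / a ^ 2) * log (1 + a)) :
    HasDerivAt v (2 / 3) 0 := by
  rw [hasDerivAt_iff_isLittleO]
  refine IsBigO.trans_isLittleO (g := fun x : ℝ => x ^ 2) ?_
    (by simpa using isLittleO_pow_id one_lt_two)
  refine IsBigO.of_bound 3 ?_
  filter_upwards [Metric.closedBall_mem_nhds (0 : ℝ) (by norm_num : (0 : ℝ) < 1 / 2)] with x hx
  rw [Metric.mem_closedBall, dist_zero_right] at hx
  simpa [hv0, Real.norm_eq_abs, abs_of_nonneg (sq_nonneg x), mul_comm] using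
    abs_v_sub_linear_le hv0 hv hx

lemma strictMonoOn_v (hv0 : v 0 = 1 / 2)
    (hv : ∀ a : ℝ, a ≠ 0 → v a = 1 / a - ((1 - a ^ 2) / a ^ 2) * log (1 + a)) :
    StrictMonoOn v (Ici 0) := by
  have hd : ∀ x, 0 < x → HasDerivAt v (q x / x ^ 3) x :=
    fun x hx => hasDerivAt_v_of_ne_zero hv hx.ne' (by linarith)
  refine strictMonoOn_of_hasDerivWithinAt_pos (convex_Ici 0) (f' := fun x => q x / x ^ 3)
    (fun x hx => ?_) ?_ ?_
  · rcases (mem_Ici.1 hx).eq_or_lt with rfl | hx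
    · exact (hasDerivAt_v_zero hv0 hv).continuousAt.continuousWithinAt
    · exact (hd x hx).continuousAt.continuousWithinAt
  all_goals rw [interior_Ici]
  · exact fun x hx => (hd x hx).hasDerivWithinAt
  · exact fun x (hx : 0 < x) => div_pos (q_pos hx) (pow_pos hx 3)

end

/-- With `v(a) = 1/a − ((1−a²)/a²)log(1+a)` on `(0,1]` and `v(0) = 1/2`, `v` is strictly
increasing on `[0,1]`, `v'(1) = 2 log 2 − 1 > 0`, `v'(a) > v'(1)` for `a ∈ [0,1)`, and
`1/2 ≤ v(a) ≤ 1` on `[0,1]`. -/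
theorem stmt_10 (v : ℝ → ℝ)
    (hv0 : v 0 = 1 / 2)
    (hv : ∀ a : ℝ, a ≠ 0 → v a = 1 / a - ((1 - a ^ 2) / a ^ 2) * Real.log (1 + a)) :
    StrictMonoOn v (Set.Icc (0 : ℝ) 1) ∧
    deriv v 1 = 2 * Real.log 2 - 1 ∧ 0 < 2 * Real.log 2 - 1 ∧
    (∀ a ∈ Set.Ico (0 : ℝ) 1, 2 * Real.log 2 - 1 < deriv v a) ∧
    (∀ a ∈ Set.Icc (0 : ℝ) 1, 1 / 2 ≤ v a ∧ v a ≤ 1) := by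
  have hderiv : ∀ a, 0 < a → deriv v a = q a / a ^ 3 :=
    fun a ha => (hasDerivAt_v_of_ne_zero hv ha.ne' (by linarith)).deriv
  have hq1 : q 1 / 1 ^ 3 = 2 * log 2 - 1 := by norm_num [q]; ring
  have hmono := (strictMonoOn_v hv0 hv).mono (Icc_subset_Ici_self : Icc (0 : ℝ) 1 ⊆ _)
  have hv1 : v 1 = 1 := by norm_num [hv 1 one_ne_zero]
  refine ⟨hmono, by rw [hderiv 1 one_pos, hq1], by linarith [log_two_gt_d9], ?_, ?_⟩
  · rintro a ⟨ha0, ha1⟩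
    rcases ha0.eq_or_lt with rfl | ha0
    · rw [(hasDerivAt_v_zero hv0 hv).deriv]
      linarith [log_two_lt_d9]
    · rw [hderiv a ha0, ← hq1]
      exact strictAntiOn_q_div_pow_three ha0 (mem_Ioi.2 one_pos) ha1
  · intro a ha
    exact ⟨hv0 ▸ hmono.monotoneOn (left_mem_Icc.2 zero_le_one) ha ha.1,
      hv1 ▸ hmono.monotoneOn ha (right_mem_Icc.2 zero_le_one) ha.2⟩
end

section
/- For every λ with 0 < λ < (3 − 4 log 2)/(4 log 2 − 2), there exists a ∈ (0,1) such that 1 + λ(2v(a) − a) + λ²·v(a)² > 1 + λ + λ², where v(a) = 1/a − ((1−a²)/a²)log(1+a). Consequently the coefficient bound |a₃| ≤ 1 + λ + λ² fails for some f ∈ 𝒰(λ). -/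
/-!
The witness is `f = z / g` with `g(z) = 1 - (1 + λ v) z + λ z P(z)`, where `P` is the primitive
vanishing at `0` of the disc automorphism `ψ(z) = (z + a) / (1 + a z)`, so that `P(1) = v(a)`.
Since `g - z g' = 1 - λ z² ψ`, we get `(z / f)² f' - 1 = -λ z² ψ(z)`, of norm `< λ` in the disc.
The function `g` has no zero in the disc: `g(z) = (1 - z) - λ z (P(1) - P(z))` and `P` is
`1`-Lipschitz on the closed disc because `|ψ| ≤ 1` there. Expanding `z / g` gives
`a₃ = (1 + λ v)² - λ a`. This exceeds `1 + λ + λ²` for `a` close to `1`: the difference vanishes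
at `a = 1` and, as `v(1) = 1` and `v'(1) = 2 log 2 - 1`, its derivative there is
`λ (4 log 2 - 3 + λ (4 log 2 - 2)) < 0`.
-/

open Complex Metric Filter Topology Set

lemma HasDerivAt.eventually_pos_nhdsLT {h : ℝ → ℝ} {x D : ℝ} (hd : HasDerivAt h D x)
    (hx : h x = 0) (hD : D < 0) : ∀ᶠ y in 𝓝[<] x, 0 < h y := by
  filter_upwards [hd.hasDerivWithinAt.limsup_slope_le' (lt_irrefl x) hD, self_mem_nhdsWithin]
    with y hslope (hy : y < x)
  rw [slope_def_field, hx, sub_zero] at hslope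
  exact (div_neg_iff.mp hslope).resolve_right (fun h => (sub_neg.mpr hy).not_gt h.2) |>.1

lemma iteratedDeriv_three_id_div_zero {𝕜 : Type*} [NontriviallyNormedField 𝕜] {g : 𝕜 → 𝕜}
    (hg : ContDiffAt 𝕜 3 g 0) (hg0 : g 0 = 1) :
    iteratedDeriv 3 (fun z => z / g z) 0 = 6 * deriv g 0 ^ 2 - 3 * iteratedDeriv 2 g 0 := by
  set f : 𝕜 → 𝕜 := fun z => z / g z
  have hf : ContDiffAt 𝕜 3 f 0 := contDiffAt_id.div hg (by simp [hg0])
  have hfg : f * g =ᶠ[𝓝 0] id := by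
    filter_upwards [hg.continuousAt.eventually_ne (by simp [hg0] : g 0 ≠ 0)] with z hz
    simp [f, div_mul_cancel₀ _ hz]
  have leibniz : ∀ n ≤ 3, iteratedDeriv n id (0 : 𝕜) = ∑ i ∈ Finset.range (n + 1),
      n.choose i * iteratedDeriv i f 0 * iteratedDeriv (n - i) g 0 := fun n hn => by
    rw [← hfg.iteratedDeriv_eq, iteratedDeriv_mul (hf.of_le (by exact_mod_cast hn))
      (hg.of_le (by exact_mod_cast hn))]
  have h1 := leibniz 1 (by norm_num)
  have h2 := leibniz 2 (by norm_num)
  have h3 := leibniz 3 (by norm_num)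
  simp only [iteratedDeriv_id, one_ne_zero, ↓reduceIte, Nat.reduceAdd, Finset.sum_range_succ,
    Finset.range_one, Finset.sum_singleton, Nat.choose_succ_self_right, zero_add, Nat.cast_one,
    iteratedDeriv_zero, hg0, div_one, mul_zero, tsub_zero, iteratedDeriv_one, zero_mul,
    Nat.choose_self, one_mul, tsub_self, mul_one, OfNat.ofNat_ne_zero, OfNat.ofNat_ne_one,
    Nat.choose_zero_right, Nat.cast_ofNat, Nat.add_one_sub_one, Nat.choose_one_right, Nat.reduceSub,
    f] at h1 h2 h3
  linear_combination (-1 : 𝕜) * h3 + (3 * iteratedDeriv 2 g 0 - 6 * deriv g 0 ^ 2) * h1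
    + 3 * deriv g 0 * h2

def classU (lam : ℝ) : Set (ℂ → ℂ) :=
  {f | DifferentiableOn ℂ f (ball 0 1) ∧ f 0 = 0 ∧ deriv f 0 = 1 ∧
    ∀ z ∈ ball (0 : ℂ) 1, z ≠ 0 → ‖(z / f z) ^ 2 * deriv f z - 1‖ < lam}

namespace ClassU

noncomputable def vFun (a : ℝ) : ℝ := 1 / a - ((1 - a ^ 2) / a ^ 2) * Real.log (1 + a)

lemma vFun_one : vFun 1 = 1 := by norm_num [vFun]

lemma hasDerivAt_vFun_one : HasDerivAt vFun (2 * Real.log 2 - 1) 1 := by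
  have h := ((hasDerivAt_const (1 : ℝ) (1 : ℝ)).fun_div (hasDerivAt_id' 1) one_ne_zero).fun_sub
    ((((hasDerivAt_pow 2 (1 : ℝ)).const_sub 1).fun_div (hasDerivAt_pow 2 (1 : ℝ))
      (by norm_num)).fun_mul (((hasDerivAt_id' (1 : ℝ)).const_add 1).log (by norm_num)))
  exact h.congr_deriv (by norm_num; ring)

lemma critical_lam_lt_one : (3 - 4 * Real.log 2) / (4 * Real.log 2 - 2) < 1 := by
  have hlog := Real.log_two_gt_d9
  rw [div_lt_one (by linarith)]
  linarith

lemma exists_gain_near_one {lam : ℝ} (hlam0 : 0 < lam)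
    (hlam1 : lam < (3 - 4 * Real.log 2) / (4 * Real.log 2 - 2)) :
    ∃ a ∈ Ioo (0 : ℝ) 1, 1 + lam + lam ^ 2 < 1 + lam * (2 * vFun a - a) + lam ^ 2 * vFun a ^ 2 := by
  have hlog := Real.log_two_gt_d9
  have hlam : lam * (4 * Real.log 2 - 2) < 3 - 4 * Real.log 2 :=
    (lt_div_iff₀ (by linarith)).mp hlam1
  have hgain : HasDerivAt (fun a => lam * (2 * vFun a - a) + lam ^ 2 * vFun a ^ 2 - lam - lam ^ 2)
      (lam * (4 * Real.log 2 - 3 + lam * (4 * Real.log 2 - 2))) 1 := by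
    have h := ((((hasDerivAt_vFun_one.const_mul 2).sub (hasDerivAt_id' 1)).const_mul lam).add
      ((hasDerivAt_vFun_one.pow 2).const_mul (lam ^ 2))).sub_const lam |>.sub_const (lam ^ 2)
    exact h.congr_deriv (by simp only [vFun_one]; ring)
  obtain ⟨a, hpos, ha⟩ := ((hgain.eventually_pos_nhdsLT (by simp only [vFun_one]; ring)
    (by nlinarith)).and (Ioo_mem_nhdsLT zero_lt_one)).exists
  exact ⟨a, ha, by linarith⟩

noncomputable def mobius (a : ℝ) (z : ℂ) : ℂ := (z + a) / (1 + a * z)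

noncomputable def primMobius (a : ℝ) (z : ℂ) : ℂ :=
  z / a - ((1 - (a : ℂ) ^ 2) / (a : ℂ) ^ 2) * log (1 + a * z)

variable {a : ℝ} {z w : ℂ}

lemma one_add_mul_mem_slitPlane (ha : |a| < 1) (hw : ‖w‖ ≤ 1) : 1 + a * w ∈ slitPlane := by
  refine mem_slitPlane_of_norm_lt_one ?_
  rw [norm_mul, norm_real, Real.norm_eq_abs]
  exact (mul_le_of_le_one_right (abs_nonneg a) hw).trans_lt ha

lemma one_add_mul_ne_zero (ha : |a| < 1) (hw : ‖w‖ ≤ 1) : 1 + a * w ≠ 0 :=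
  slitPlane_ne_zero (one_add_mul_mem_slitPlane ha hw)

lemma normSq_one_add_mul_sub_normSq_add (a : ℝ) (w : ℂ) :
    normSq (1 + a * w) - normSq (w + a) = (1 - a ^ 2) * (1 - normSq w) := by
  simp only [normSq_apply, add_re, add_im, mul_re, mul_im, ofReal_re, ofReal_im, one_re, one_im]
  ring

lemma norm_mobius_le (ha : |a| < 1) (hw : ‖w‖ ≤ 1) : ‖mobius a w‖ ≤ 1 := by
  rw [mobius, norm_div, div_le_one (norm_pos_iff.mpr (one_add_mul_ne_zero ha hw)),
    ← sq_le_sq₀ (norm_nonneg _) (norm_nonneg _), Complex.sq_norm, Complex.sq_norm, ← sub_nonneg,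
    normSq_one_add_mul_sub_normSq_add]
  have ha2 : a ^ 2 < 1 := by simpa using sq_lt_one_iff_abs_lt_one a |>.mpr ha
  have hw2 : normSq w ≤ 1 := by rw [← Complex.sq_norm]; exact pow_le_one₀ (norm_nonneg w) hw
  exact mul_nonneg (by linarith) (by linarith)

lemma hasDerivAt_primMobius (ha0 : a ≠ 0) (hz : 1 + a * z ∈ slitPlane) :
    HasDerivAt (primMobius a) (mobius a z) z := by
  have h := ((hasDerivAt_id' z).div_const (a : ℂ)).sub
    ((((hasDerivAt_id' z).const_mul (a : ℂ)).const_add 1).clog hz |>.const_mul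
      ((1 - (a : ℂ) ^ 2) / (a : ℂ) ^ 2))
  refine h.congr_deriv ?_
  rw [mobius]
  field_simp [ofReal_ne_zero.mpr ha0, slitPlane_ne_zero hz]
  ring

lemma primMobius_zero : primMobius a 0 = 0 := by simp [primMobius]

lemma primMobius_one (ha : -1 < a) : primMobius a 1 = vFun a := by
  have hlog : log (1 + a * 1) = (Real.log (1 + a) : ℂ) := by
    rw [mul_one, ← ofReal_one, ← ofReal_add, ofReal_log (by linarith)]
  rw [primMobius, hlog, vFun]
  push_cast
  ring

lemma norm_primMobius_sub_le (ha0 : a ≠ 0) (ha : |a| < 1) (hz : ‖z‖ ≤ 1) (hw : ‖w‖ ≤ 1) :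
    ‖primMobius a z - primMobius a w‖ ≤ ‖z - w‖ := by
  have h := (convex_closedBall (0 : ℂ) 1).norm_image_sub_le_of_norm_hasDerivWithin_le
    (fun u hu => (hasDerivAt_primMobius ha0
      (one_add_mul_mem_slitPlane ha (mem_closedBall_zero_iff.mp hu))).hasDerivWithinAt)
    (fun u hu => norm_mobius_le ha (mem_closedBall_zero_iff.mp hu))
    (mem_closedBall_zero_iff.mpr hw) (mem_closedBall_zero_iff.mpr hz)
  simpa using h

noncomputable def extremalDenom (a lam : ℝ) (z : ℂ) : ℂ :=
  1 - (1 + lam * primMobius a 1) * z + lam * z * primMobius a z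

noncomputable def extremal (a lam : ℝ) (z : ℂ) : ℂ := z / extremalDenom a lam z

variable {lam : ℝ}

lemma extremalDenom_ne_zero (ha0 : a ≠ 0) (ha : |a| < 1) (hlam : |lam| ≤ 1) (hz : ‖z‖ < 1) :
    extremalDenom a lam z ≠ 0 := by
  have hfactor : extremalDenom a lam z
      = (1 - z) - lam * z * (primMobius a 1 - primMobius a z) := by
    rw [extremalDenom]; ring
  have hz1 : 0 < ‖1 - z‖ := norm_pos_iff.mpr (sub_ne_zero.mpr (by rintro rfl; simp at hz))
  have hsmall : ‖(lam : ℂ) * z * (primMobius a 1 - primMobius a z)‖ < ‖1 - z‖ := by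
    rw [norm_mul, norm_mul, norm_real, Real.norm_eq_abs]
    calc |lam| * ‖z‖ * ‖primMobius a 1 - primMobius a z‖ ≤ 1 * ‖z‖ * ‖1 - z‖ := by
          gcongr; exact norm_primMobius_sub_le ha0 ha (by simp) hz.le
      _ < ‖1 - z‖ := by nlinarith
  rw [hfactor, sub_ne_zero]
  exact fun h => hsmall.ne' (congrArg norm h)

lemma hasDerivAt_extremalDenom (ha0 : a ≠ 0) (ha : |a| < 1) (hz : ‖z‖ ≤ 1) :
    HasDerivAt (extremalDenom a lam)
      (-(1 + lam * primMobius a 1) + lam * (primMobius a z + z * mobius a z)) z := by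
  have h := (((hasDerivAt_id' z).const_mul (1 + lam * primMobius a 1)).const_sub 1).add
    (((hasDerivAt_id' z).const_mul (lam : ℂ)).mul
      (hasDerivAt_primMobius ha0 (one_add_mul_mem_slitPlane ha hz)))
  exact h.congr_deriv (by ring)

lemma hasDerivAt_extremal (ha0 : a ≠ 0) (ha : |a| < 1) (hlam : |lam| ≤ 1) (hz : ‖z‖ < 1) :
    HasDerivAt (extremal a lam)
      ((1 - lam * z ^ 2 * mobius a z) / extremalDenom a lam z ^ 2) z := by
  have h := (hasDerivAt_id' z).div (hasDerivAt_extremalDenom (lam := lam) ha0 ha hz.le)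
    (extremalDenom_ne_zero ha0 ha hlam hz)
  exact h.congr_deriv (by rw [extremalDenom]; ring)

lemma sq_div_extremal_mul_deriv_sub_one (ha0 : a ≠ 0) (ha : |a| < 1) (hlam : |lam| ≤ 1)
    (hz : ‖z‖ < 1) (hz0 : z ≠ 0) :
    (z / extremal a lam z) ^ 2 * deriv (extremal a lam) z - 1 = -(lam * z ^ 2 * mobius a z) := by
  rw [(hasDerivAt_extremal ha0 ha hlam hz).deriv, extremal, div_div_cancel₀ hz0]
  field_simp [extremalDenom_ne_zero ha0 ha hlam hz]
  ring

lemma extremal_mem_classU (ha0 : a ≠ 0) (ha : |a| < 1) (hlam0 : 0 < lam) (hlam1 : lam ≤ 1) :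
    extremal a lam ∈ classU lam := by
  have hlam : |lam| ≤ 1 := by rwa [abs_of_pos hlam0]
  refine ⟨fun z hz => ?_, by simp [extremal], ?_, fun z hz hz0 => ?_⟩
  · exact (hasDerivAt_extremal ha0 ha hlam
      (mem_ball_zero_iff.mp hz)).differentiableAt.differentiableWithinAt
  · rw [(hasDerivAt_extremal ha0 ha hlam (by simp)).deriv]
    simp [extremalDenom, primMobius_zero]
  · have hz1 := mem_ball_zero_iff.mp hz
    rw [sq_div_extremal_mul_deriv_sub_one ha0 ha hlam hz1 hz0, norm_neg, norm_mul, norm_mul,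
      norm_real, Real.norm_eq_abs, abs_of_pos hlam0, norm_pow]
    have hz2 : ‖z‖ ^ 2 < 1 := pow_lt_one₀ (norm_nonneg z) hz1 two_ne_zero
    have hψ := norm_mobius_le ha hz1.le
    calc lam * ‖z‖ ^ 2 * ‖mobius a z‖ ≤ lam * ‖z‖ ^ 2 :=
          mul_le_of_le_one_right (by positivity) hψ
      _ < lam := mul_lt_of_lt_one_right hlam0 hz2

lemma extremalDenom_zero : extremalDenom a lam 0 = 1 := by simp [extremalDenom]

lemma iteratedDeriv_two_extremalDenom_zero (ha0 : a ≠ 0) (ha : |a| < 1) :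
    iteratedDeriv 2 (extremalDenom a lam) 0 = 2 * lam * a := by
  have hderiv : deriv (extremalDenom a lam) =ᶠ[𝓝 0]
      fun z => -(1 + lam * primMobius a 1) + lam * (primMobius a z + z * mobius a z) := by
    filter_upwards [ball_mem_nhds (0 : ℂ) one_pos] with z hz
    exact (hasDerivAt_extremalDenom ha0 ha (mem_ball_zero_iff.mp hz).le).deriv
  have hmob : DifferentiableAt ℂ (mobius a) 0 :=
    (by fun_prop : DifferentiableAt ℂ (fun z : ℂ => z + a) 0).div (by fun_prop) (by simp)
  have h := (((hasDerivAt_primMobius ha0 (by simp)).add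
    ((hasDerivAt_id' 0).mul hmob.hasDerivAt)).const_mul (lam : ℂ)).const_add
    (-(1 + lam * primMobius a 1))
  rw [iteratedDeriv_succ, iteratedDeriv_one, hderiv.deriv_eq]
  refine h.deriv.trans ?_
  simp only [mobius]
  ring_nf

lemma norm_iteratedDeriv_three_extremal_zero (ha0 : a ≠ 0) (ha : |a| < 1) :
    ‖iteratedDeriv 3 (extremal a lam) 0‖ / 6 = |(1 + lam * vFun a) ^ 2 - lam * a| := by
  have hdiff : DifferentiableOn ℂ (extremalDenom a lam) (ball 0 1) := fun z hz =>
    (hasDerivAt_extremalDenom ha0 ha (mem_ball_zero_iff.mp hz).le).differentiableAt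
      |>.differentiableWithinAt
  have hsmooth : ContDiffAt ℂ 3 (extremalDenom a lam) 0 :=
    (hdiff.contDiffOn isOpen_ball).contDiffAt (ball_mem_nhds 0 one_pos)
  have hderiv : deriv (extremalDenom a lam) 0 = -(1 + lam * vFun a) := by
    rw [(hasDerivAt_extremalDenom ha0 ha (by simp)).deriv, primMobius_one (neg_lt_of_abs_lt ha),
      primMobius_zero]
    ring
  have h := iteratedDeriv_three_id_div_zero hsmooth extremalDenom_zero
  rw [hderiv, iteratedDeriv_two_extremalDenom_zero ha0 ha] at h
  rw [show extremal a lam = fun z => z / extremalDenom a lam z from rfl, h,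
    show 6 * (-(1 + lam * (vFun a : ℂ))) ^ 2 - 3 * (2 * lam * a)
      = 6 * (((1 + lam * vFun a) ^ 2 - lam * a : ℝ) : ℂ) by push_cast; ring,
    norm_mul, norm_real, Real.norm_eq_abs]
  norm_num

end ClassU

/-- For `0 < λ < (3 − 4 log 2)/(4 log 2 − 2)` there is `a ∈ (0,1)` with
`1 + λ(2v(a) − a) + λ²v(a)² > 1 + λ + λ²`; consequently the coefficient bound
`|a₃| ≤ 1 + λ + λ²` fails for some `f ∈ 𝒰(λ)`. -/
theorem stmt_11 (v : ℝ → ℝ)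
    (hv : ∀ a : ℝ, a ≠ 0 → v a = 1 / a - ((1 - a ^ 2) / a ^ 2) * Real.log (1 + a))
    (lam : ℝ) (hlam0 : 0 < lam)
    (hlam1 : lam < (3 - 4 * Real.log 2) / (4 * Real.log 2 - 2)) :
    (∃ a ∈ Set.Ioo (0 : ℝ) 1,
      1 + lam + lam ^ 2 < 1 + lam * (2 * v a - a) + lam ^ 2 * (v a) ^ 2) ∧
    ∃ f : ℂ → ℂ, DifferentiableOn ℂ f (ball (0 : ℂ) 1) ∧ f 0 = 0 ∧ deriv f 0 = 1 ∧
      (∀ z ∈ ball (0 : ℂ) 1, z ≠ 0 → ‖(z / f z) ^ 2 * deriv f z - 1‖ < lam) ∧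
      1 + lam + lam ^ 2 < ‖iteratedDeriv 3 f 0‖ / 6 := by
  obtain ⟨a, ha, hgain⟩ := ClassU.exists_gain_near_one hlam0 hlam1
  have ha0 : a ≠ 0 := ha.1.ne'
  have ha1 : |a| < 1 := by rw [abs_of_pos ha.1]; exact ha.2
  obtain ⟨hdiff, hzero, hderiv, hcond⟩ :=
    ClassU.extremal_mem_classU ha0 ha1 hlam0 (hlam1.trans ClassU.critical_lam_lt_one).le
  refine ⟨⟨a, ha, hv a ha0 ▸ hgain⟩, ClassU.extremal a lam, hdiff, hzero, hderiv, hcond, ?_⟩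
  rw [ClassU.norm_iteratedDeriv_three_extremal_zero ha0 ha1]
  exact hgain.trans_le ((le_abs_self _).trans_eq' (by ring))
end

section
/- Let rₙ = 1 − 2^{−4n}, θₙ = 2^{−n}, aₙ = rₙe^{iθₙ} for n ≥ 1. Then |1 − aₙ| ≥ (√15/(2π))·2^{−n} for all n ≥ 1, and consequently the series Σₙ (1 − |aₙ|)/|1 − aₙ| converges. -/
/-!
Since `|1 - r e^{iθ}|² = (1 - r)² + 2r(1 - cos θ)` and `1 - cos θ ≥ 2θ²/π²` on `[-π, π]`, we get
`|1 - r e^{iθ}| ≥ 2√r |θ| / π`; for `rₙ ≥ 15/16` this is the stated lower bound. Then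
`(1 - |aₙ|)/|1 - aₙ| ≤ 2^{-4(n+1)} / (c 2^{-(n+1)}) = 8^{-(n+1)}/c` with `c = √15/(2π)`,
a geometric series.
-/

open Complex
open scoped Real

namespace Complex

theorem norm_one_sub_ofReal_mul_exp_I_mul_sq (r θ : ℝ) :
    ‖1 - r * exp (I * θ)‖ ^ 2 = (1 - r) ^ 2 + 2 * r * (1 - Real.cos θ) := by
  rw [Complex.sq_norm]
  simp only [normSq_apply, sub_re, one_re, mul_re, ofReal_re, exp_re, I_re, zero_mul, I_im,
    ofReal_im, mul_zero, sub_self, Real.exp_zero, mul_im, one_mul, zero_add, exp_im, sub_zero, sub_im,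
    one_im, add_zero, zero_sub, mul_neg, neg_mul, neg_neg]
  linear_combination r ^ 2 * Real.sin_sq_add_cos_sq θ

theorem norm_ofReal_mul_exp_I_mul (r θ : ℝ) : ‖(r : ℂ) * exp (I * θ)‖ = |r| := by
  rw [norm_mul, norm_exp_I_mul_ofReal, mul_one, norm_real, Real.norm_eq_abs]

theorem two_mul_sqrt_mul_abs_div_pi_le_norm_one_sub {r θ : ℝ} (hr : 0 ≤ r) (hθ : |θ| ≤ π) :
    2 * √r * |θ| / π ≤ ‖1 - r * exp (I * θ)‖ := by
  have hcos : 2 * θ ^ 2 ≤ (1 - Real.cos θ) * π ^ 2 := by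
    have := Real.cos_le_one_sub_mul_cos_sq hθ
    have hπ : 0 < π ^ 2 := by positivity
    rw [← div_le_iff₀ hπ]
    linarith [show 2 / π ^ 2 * θ ^ 2 = 2 * θ ^ 2 / π ^ 2 by ring]
  rw [← pow_le_pow_iff_left₀ (by positivity) (norm_nonneg _) two_ne_zero,
    norm_one_sub_ofReal_mul_exp_I_mul_sq, div_pow, mul_pow, mul_pow, Real.sq_sqrt hr, sq_abs,
    div_le_iff₀ (by positivity)]
  nlinarith [sq_nonneg (1 - r), sq_nonneg π, mul_le_mul_of_nonneg_left hcos hr]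

theorem sqrt_fifteen_div_two_pi_mul_le_norm_one_sub {r θ : ℝ} (hr : 15 / 16 ≤ r)
    (hθ₀ : 0 ≤ θ) (hθπ : θ ≤ π) :
    √15 / (2 * π) * θ ≤ ‖1 - r * exp (I * θ)‖ := by
  have hsqrt : √15 / 4 ≤ √r := Real.le_sqrt_of_sq_le <| by
    rw [div_pow, Real.sq_sqrt (by norm_num)]; linarith
  calc √15 / (2 * π) * θ = 2 * (√15 / 4) * |θ| / π := by
        rw [abs_of_nonneg hθ₀]; field_simp; ring
    _ ≤ 2 * √r * |θ| / π := by gcongr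
    _ ≤ _ := two_mul_sqrt_mul_abs_div_pi_le_norm_one_sub (by linarith)
        (by rwa [abs_of_nonneg hθ₀])

end Complex

/-- For `aₙ = (1 − 2^{−4n}) e^{i 2^{−n}}` (`n ≥ 1`): `|1 − aₙ| ≥ (√15/(2π)) 2^{−n}` and
`Σ (1 − |aₙ|)/|1 − aₙ|` converges. -/
theorem stmt_14 (a : ℕ → ℂ)
    (ha : ∀ n : ℕ, a n = ((1 - (1 / 2 : ℝ) ^ (4 * (n + 1)) : ℝ) : ℂ) *
      Complex.exp (Complex.I * ((1 / 2 : ℝ) ^ (n + 1) : ℝ))) :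
    (∀ n : ℕ, Real.sqrt 15 / (2 * Real.pi) * (1 / 2) ^ (n + 1) ≤ ‖1 - a n‖) ∧
    Summable (fun n : ℕ => (1 - ‖a n‖) / ‖1 - a n‖) := by
  have hr : ∀ n : ℕ, 15 / 16 ≤ 1 - (1 / 2 : ℝ) ^ (4 * (n + 1)) := fun n => by
    have : (1 / 2 : ℝ) ^ (4 * (n + 1)) ≤ (1 / 2) ^ 4 :=
      pow_le_pow_of_le_one (by norm_num) (by norm_num) (by omega)
    linarith [show (1 / 2 : ℝ) ^ 4 = 1 / 16 by norm_num]
  have hθ : ∀ n : ℕ, (1 / 2 : ℝ) ^ (n + 1) ≤ π := fun n =>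
    (pow_le_one₀ (by norm_num) (by norm_num)).trans (by linarith [Real.pi_gt_three])
  have lower : ∀ n : ℕ, √15 / (2 * π) * (1 / 2) ^ (n + 1) ≤ ‖1 - a n‖ := fun n => by
    rw [ha n]
    exact sqrt_fifteen_div_two_pi_mul_le_norm_one_sub (hr n) (by positivity) (hθ n)
  have gap : ∀ n : ℕ, 1 - ‖a n‖ = (1 / 8 : ℝ) ^ (n + 1) * (1 / 2) ^ (n + 1) := fun n => by
    rw [ha n, norm_ofReal_mul_exp_I_mul, abs_of_nonneg (by linarith [hr n]), ← mul_pow, pow_mul]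
    norm_num
  refine ⟨lower, Summable.of_nonneg_of_le (fun n => ?_) (fun n => ?_)
    ((summable_geometric_of_lt_one (by norm_num) (by norm_num : (1 / 8 : ℝ) < 1)).mul_left
      (2 * π / √15 * (1 / 8)))⟩
  · rw [gap]; positivity
  · calc (1 - ‖a n‖) / ‖1 - a n‖
        ≤ (1 / 8 : ℝ) ^ (n + 1) * (1 / 2) ^ (n + 1) / (√15 / (2 * π) * (1 / 2) ^ (n + 1)) := by
          rw [gap]; gcongr; exact lower n
      _ = 2 * π / √15 * (1 / 8) * (1 / 8) ^ n := by
          field_simp; ring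
end

section
/- Let rₙ = 1 − 2^{−4n}, θₙ = 2^{−n}, aₙ = rₙe^{iθₙ}. Then Σₙ (1 − |aₙ|)/|1 − aₙ|² converges; indeed (1 − |aₙ|)/|1 − aₙ|² ≤ (π²/15)·2^{−(2n−2)} for all n ≥ 1. -/
/-!
Write `θ = 2^{-(n+1)}` and `r = 1 - θ⁴`, so that `aₙ = r e^{iθ}` and `1 - |aₙ| = θ⁴`. The identity
`|1 - r e^{iθ}|² = (1 - r)² + 4 r sin²(θ/2)` and Jordan's inequality `sin x ≥ 2x/π` give
`|1 - aₙ|² ≥ 4 r θ² / π²`, so the ratio is at most `π² θ² / (4 r) ≤ (4π²/15) θ²` as `r ≥ 15/16`.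
These bounds form a geometric series.
-/

open Complex

theorem Complex.norm_ofReal_mul_exp_mul_I {r : ℝ} (hr : 0 ≤ r) (θ : ℝ) :
    ‖(r : ℂ) * exp (θ * I)‖ = r := by
  rw [norm_mul, norm_exp_ofReal_mul_I, Complex.norm_of_nonneg hr, mul_one]

theorem Complex.norm_one_sub_ofReal_mul_exp_sq (r θ : ℝ) :
    ‖1 - r * exp (θ * I)‖ ^ 2 = (1 - r) ^ 2 + 4 * r * Real.sin (θ / 2) ^ 2 := by
  have hcos : Real.cos θ = 1 - 2 * Real.sin (θ / 2) ^ 2 := by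
    have h := Real.cos_two_mul' (θ / 2)
    rw [mul_div_cancel₀ θ two_ne_zero] at h
    linear_combination h + Real.sin_sq_add_cos_sq (θ / 2)
  rw [Complex.sq_norm, normSq_apply, exp_mul_I, ← ofReal_cos, ← ofReal_sin]
  simp only [sub_re, sub_im, mul_re, mul_im, add_re, add_im,
    ofReal_re, ofReal_im, one_re, one_im, I_re, I_im]
  linear_combination r ^ 2 * Real.sin_sq_add_cos_sq θ - 2 * r * hcos

theorem Complex.mul_sq_le_norm_one_sub_ofReal_mul_exp_sq {r θ : ℝ} (hr : 0 ≤ r) (hθ0 : 0 ≤ θ)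
    (hθπ : θ ≤ Real.pi) : r * (2 * θ / Real.pi) ^ 2 ≤ ‖1 - r * exp (θ * I)‖ ^ 2 := by
  have hjordan : θ / Real.pi ≤ Real.sin (θ / 2) := by
    have := Real.mul_le_sin (x := θ / 2) (by positivity) (by linarith)
    rwa [div_mul_div_comm, mul_comm Real.pi, mul_div_mul_left _ _ two_ne_zero] at this
  have hsq : (θ / Real.pi) ^ 2 ≤ Real.sin (θ / 2) ^ 2 := pow_le_pow_left₀ (by positivity) hjordan 2
  have hsplit : (2 * θ / Real.pi) ^ 2 = 4 * (θ / Real.pi) ^ 2 := by ring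
  rw [norm_one_sub_ofReal_mul_exp_sq, hsplit]
  nlinarith [sq_nonneg (1 - r), mul_le_mul_of_nonneg_left hsq hr]

theorem Complex.one_sub_norm_div_norm_one_sub_sq_le {r θ : ℝ} (hr0 : 0 < r) (hr1 : r ≤ 1)
    (hθ0 : 0 < θ) (hθπ : θ ≤ Real.pi) :
    (1 - ‖(r : ℂ) * exp (θ * I)‖) / ‖1 - r * exp (θ * I)‖ ^ 2 ≤
      (1 - r) / (r * (2 * θ / Real.pi) ^ 2) := by
  rw [norm_ofReal_mul_exp_mul_I hr0.le]
  exact div_le_div_of_nonneg_left (by linarith) (by positivity)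
    (mul_sq_le_norm_one_sub_ofReal_mul_exp_sq hr0.le hθ0.le hθπ)

theorem Complex.one_sub_norm_div_norm_one_sub_sq_le_of_le_half {θ : ℝ} (hθ0 : 0 < θ)
    (hθ : θ ≤ 1 / 2) :
    (1 - ‖((1 - θ ^ 4 : ℝ) : ℂ) * exp (θ * I)‖) / ‖1 - ((1 - θ ^ 4 : ℝ) : ℂ) * exp (θ * I)‖ ^ 2 ≤
      Real.pi ^ 2 / 15 * (4 * θ ^ 2) := by
  have hθ4 : θ ^ 4 ≤ 1 / 16 := by
    calc θ ^ 4 ≤ (1 / 2) ^ 4 := pow_le_pow_left₀ hθ0.le hθ 4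
      _ = 1 / 16 := by norm_num
  have hr : 0 < 1 - θ ^ 4 := by linarith
  refine (one_sub_norm_div_norm_one_sub_sq_le hr (by linarith [pow_pos hθ0 4]) hθ0
    (by linarith [Real.pi_gt_three])).trans ?_
  rw [div_le_iff₀ (by positivity)]
  field_simp
  nlinarith [mul_le_mul_of_nonneg_left hθ4 (pow_pos hθ0 4).le]

/-- For `aₙ = (1 − 2^{−4n}) e^{i 2^{−n}}` (`n ≥ 1`):
`(1 − |aₙ|)/|1 − aₙ|² ≤ (π²/15) 2^{−(2n−2)}` and `Σ (1 − |aₙ|)/|1 − aₙ|²` converges. -/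
theorem stmt_15 (a : ℕ → ℂ)
    (ha : ∀ n : ℕ, a n = ((1 - (1 / 2 : ℝ) ^ (4 * (n + 1)) : ℝ) : ℂ) *
      Complex.exp (Complex.I * ((1 / 2 : ℝ) ^ (n + 1) : ℝ))) :
    (∀ n : ℕ, (1 - ‖a n‖) / ‖1 - a n‖ ^ 2 ≤ Real.pi ^ 2 / 15 * (1 / 2) ^ (2 * (n + 1) - 2)) ∧
    Summable (fun n : ℕ => (1 - ‖a n‖) / ‖1 - a n‖ ^ 2) := by
  set θ : ℕ → ℝ := fun n => (1 / 2) ^ (n + 1)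
  have hθ0 (n : ℕ) : 0 < θ n := by positivity
  have hθ1 (n : ℕ) : θ n ≤ 1 / 2 := pow_le_of_le_one (by norm_num) (by norm_num) n.succ_ne_zero
  have han (n : ℕ) : a n = ((1 - θ n ^ 4 : ℝ) : ℂ) * exp (θ n * I) := by
    rw [ha, mul_comm I, mul_comm 4, pow_mul]
  have hscale (n : ℕ) : ((1 : ℝ) / 2) ^ (2 * (n + 1) - 2) = (1 / 4) ^ n := by
    rw [show 2 * (n + 1) - 2 = 2 * n by omega, pow_mul]
    norm_num
  have hbound (n : ℕ) :
      (1 - ‖a n‖) / ‖1 - a n‖ ^ 2 ≤ Real.pi ^ 2 / 15 * (1 / 2) ^ (2 * (n + 1) - 2) := by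
    have h4θ : ((1 : ℝ) / 2) ^ (2 * (n + 1) - 2) = 4 * θ n ^ 2 := by
      rw [show 2 * (n + 1) - 2 = 2 * n by omega]
      ring
    rw [han, h4θ]
    exact one_sub_norm_div_norm_one_sub_sq_le_of_le_half (hθ0 n) (hθ1 n)
  refine ⟨hbound, .of_nonneg_of_le (fun n => ?_) hbound ?_⟩
  · have hθ4 : θ n ^ 4 ≤ 1 := pow_le_one₀ (hθ0 n).le (by linarith [hθ1 n])
    rw [han, norm_ofReal_mul_exp_mul_I (sub_nonneg.2 hθ4)]
    exact div_nonneg (by linarith [pow_pos (hθ0 n) 4]) (sq_nonneg _)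
  · simp_rw [hscale]
    exact (summable_geometric_of_lt_one (by norm_num) (by norm_num)).mul_left _
end

section
/- Let rₙ = 1 − 2^{−2n}, θₙ = 2^{−n}, aₙ = rₙe^{iθₙ}. Then |1 − aₙ|² ≤ 2^{−2n} for every n ≥ 1, and therefore the series Σₙ (1 − |aₙ|)/|1 − aₙ|² diverges, since each term satisfies (1 − rₙ)/|1 − aₙ|² ≥ 1. -/
open Complex

/-- For `aₙ = (1 − 2^{−2n}) e^{i 2^{−n}}` (`n ≥ 1`): `|1 − aₙ|² ≤ 2^{−2n}`, hence every term
of `Σ (1 − |aₙ|)/|1 − aₙ|²` is at least `1` and the series diverges. -/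
theorem stmt_16 (a : ℕ → ℂ)
    (ha : ∀ n : ℕ, a n = ((1 - (1 / 2 : ℝ) ^ (2 * (n + 1)) : ℝ) : ℂ) *
      Complex.exp (Complex.I * ((1 / 2 : ℝ) ^ (n + 1) : ℝ))) :
    (∀ n : ℕ, ‖1 - a n‖ ^ 2 ≤ (1 / 2) ^ (2 * (n + 1))) ∧
    (∀ n : ℕ, 1 ≤ (1 - ‖a n‖) / ‖1 - a n‖ ^ 2) ∧
    ¬ Summable (fun n : ℕ => (1 - ‖a n‖) / ‖1 - a n‖ ^ 2) := by
  set ε : ℕ → ℝ := fun n => (1 / 2 : ℝ) ^ (2 * (n + 1)) with hε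
  set θ : ℕ → ℝ := fun n => (1 / 2 : ℝ) ^ (n + 1) with hθ
  have hθsq : ∀ n, θ n ^ 2 = ε n := by
    intro n; simp only [hθ, hε, ← pow_mul]; ring_nf
  have hεpos : ∀ n, 0 < ε n := fun n => by positivity
  have hεle : ∀ n, ε n ≤ 1 / 4 := by
    intro n
    calc ε n ≤ (1/2:ℝ) ^ 2 := by
          apply pow_le_pow_of_le_one (by norm_num) (by norm_num); omega
      _ = 1/4 := by norm_num
  have key : ∀ n, ‖1 - a n‖ ^ 2 ≤ ε n := by
    intro n
    have hre : 1 - a n = Complex.ofReal (1 - (1 - ε n) * Real.cos (θ n)) -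
        Complex.ofReal ((1 - ε n) * Real.sin (θ n)) * Complex.I := by
      rw [ha n]
      rw [show Complex.I * ((θ n : ℝ) : ℂ) = ((θ n : ℝ) : ℂ) * Complex.I by ring,
        Complex.exp_mul_I]
      simp [← Complex.ofReal_cos, ← Complex.ofReal_sin]
      push_cast
      ring_nf
      push_cast
      simp only [hε]; push_cast; ring
    have hnorm : ‖1 - a n‖ ^ 2 = (1 - (1 - ε n) * Real.cos (θ n)) ^ 2 +
        ((1 - ε n) * Real.sin (θ n)) ^ 2 := by
      rw [hre, Complex.sq_norm]
      simp [Complex.normSq_apply, Complex.cos_ofReal_re, Complex.sin_ofReal_re]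
      ring
    rw [hnorm]
    have hcos := Real.one_sub_sq_div_two_le_cos (x := θ n)
    have hpyth := Real.sin_sq_add_cos_sq (θ n)
    have h1 := hθsq n
    have h2 := hεpos n
    have h3 := hεle n
    nlinarith [sq_nonneg (Real.sin (θ n)), sq_nonneg (1 - ε n)]
  have hnormA : ∀ n, ‖a n‖ = 1 - ε n := by
    intro n
    rw [ha n, norm_mul, Complex.norm_real, Complex.norm_exp]
    have h1 : ∀ r : ℝ, (Complex.I * (r:ℂ)).re = 0 := fun r => by simp
    rw [h1, Real.exp_zero, mul_one, Real.norm_eq_abs, _root_.abs_of_nonneg]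
    have := hεle n
    simp only [hε] at this
    linarith
  have hane : ∀ n, (0:ℝ) < ‖1 - a n‖ ^ 2 := by
    intro n
    have : a n ≠ 1 := by
      intro h
      have := hnormA n
      rw [h] at this
      simp at this
      have := hεpos n
      linarith
    have h2 : (1:ℂ) - a n ≠ 0 := by
      intro h; apply this; linear_combination -h
    exact pow_pos (norm_pos_iff.mpr h2) 2
  have part2 : ∀ n, 1 ≤ (1 - ‖a n‖) / ‖1 - a n‖ ^ 2 := by
    intro n
    rw [le_div_iff₀ (hane n), one_mul, hnormA n]
    have := key n
    linarith
  refine ⟨key, part2, ?_⟩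
  intro hsum
  have h0 := hsum.tendsto_atTop_zero
  have := (h0.eventually (gt_mem_nhds (by norm_num : (0:ℝ) < 1))).exists
  obtain ⟨n, hn⟩ := this
  exact absurd (part2 n) (not_le.mpr hn)
end

section
/- Suppose H is analytic on the unit disk with H(z) = z/(1 + λz∫₀ᶻ ω(t)dt) where ω is analytic with |ω| ≤ 1 on 𝔻 and λ ∈ (0, √2 − 1]. Then for |z| = r < 1, Re{(1 − λ·conj(z²ω(z)))(1 + λz∫₀ᶻω(t)dt)} / (|1 − λz²ω(z)|·|1 + λz∫₀ᶻω(t)dt|) ≥ (1 − 2λr² − λ²r⁴)/(1 + λr²)². -/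
/-!
With `a = λz²ω(z)` and `b = λz∫₀ᶻω`, both of modulus at most `t = λr²`, expanding the numerator
gives `Re{(1 - ā)(1 + b)} ≥ 1 - 2t - t²`, while the denominator is at most `(1 + t)²`. The
condition `λ ≤ √2 - 1` makes `1 - 2t - t²` nonnegative for every `r < 1`, so the two bounds can be
divided.
-/

open Complex Metric
open scoped ComplexConjugate

lemma norm_intervalIntegral_comp_ofReal_mul_le {ω : ℂ → ℂ} {R C : ℝ}
    (hω : ∀ w ∈ ball (0 : ℂ) R, ‖ω w‖ ≤ C) {z : ℂ} (hz : z ∈ ball (0 : ℂ) R) :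
    ‖∫ s in (0 : ℝ)..1, ω ((s : ℂ) * z)‖ ≤ C := by
  have key := intervalIntegral.norm_integral_le_of_norm_le_const
    (a := 0) (b := 1) (C := C) (f := fun s : ℝ => ω ((s : ℂ) * z)) fun s hs => by
      rw [Set.uIoc_of_le zero_le_one] at hs
      apply hω
      rw [mem_ball_zero_iff] at hz ⊢
      rw [norm_mul, Complex.norm_real, Real.norm_of_nonneg hs.1.le]
      exact lt_of_le_of_lt (mul_le_of_le_one_left (norm_nonneg z) hs.2) hz
  simpa using key

lemma one_sub_norm_sub_norm_sub_mul_le_re (a b : ℂ) :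
    1 - ‖a‖ - ‖b‖ - ‖a‖ * ‖b‖ ≤ ((1 - conj a) * (1 + b)).re := by
  have hexpand : ((1 - conj a) * (1 + b)).re = 1 + b.re - a.re - (conj a * b).re := by
    simp only [mul_add, mul_one, sub_mul, one_mul, add_re, sub_re, one_re, conj_re]
    ring
  have hb : -‖b‖ ≤ b.re := (abs_le.mp (abs_re_le_norm b)).1
  have ha : a.re ≤ ‖a‖ := re_le_norm a
  have hab : (conj a * b).re ≤ ‖a‖ * ‖b‖ := by
    simpa only [norm_mul, norm_conj] using re_le_norm (conj a * b)
  linarith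

lemma div_le_re_div_norm_mul_norm {a b : ℂ} {t : ℝ} (ht : 0 ≤ t) (ht' : 2 * t + t ^ 2 ≤ 1)
    (ha : ‖a‖ ≤ t) (hb : ‖b‖ ≤ t) :
    (1 - 2 * t - t ^ 2) / (1 + t) ^ 2 ≤
      ((1 - conj a) * (1 + b)).re / (‖1 - a‖ * ‖1 + b‖) := by
  have ht1 : t < 1 := by nlinarith
  have hnum : 1 - 2 * t - t ^ 2 ≤ ((1 - conj a) * (1 + b)).re := by
    have hab : ‖a‖ * ‖b‖ ≤ t * t := mul_le_mul ha hb (norm_nonneg b) ht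
    linarith [one_sub_norm_sub_norm_sub_mul_le_re a b]
  have hsub : 1 - t ≤ ‖1 - a‖ := by
    have := norm_sub_norm_le (1 : ℂ) a
    rw [norm_one] at this
    linarith
  have hadd : 1 - t ≤ ‖1 + b‖ := by
    have := norm_sub_norm_le (1 : ℂ) (-b)
    rw [norm_one, norm_neg, sub_neg_eq_add] at this
    linarith
  have hden : ‖1 - a‖ * ‖1 + b‖ ≤ (1 + t) ^ 2 := by
    rw [sq]
    refine mul_le_mul ?_ ?_ (norm_nonneg _) (by linarith)
    · exact (norm_sub_le _ _).trans (by rw [norm_one]; linarith)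
    · exact (norm_add_le _ _).trans (by rw [norm_one]; linarith)
  apply div_le_div₀ (by linarith) hnum _ hden
  exact mul_pos (by linarith) (by linarith)

lemma two_mul_add_sq_le_one {t : ℝ} (ht : 0 ≤ t) (ht' : t ≤ Real.sqrt 2 - 1) :
    2 * t + t ^ 2 ≤ 1 := by
  nlinarith [Real.sq_sqrt (zero_le_two : (0 : ℝ) ≤ 2)]

theorem stmt_19_general (lam : ℝ) (hlam : 0 < lam) (hlam' : lam ≤ Real.sqrt 2 - 1)
    (ω : ℂ → ℂ)
    (hω1 : ∀ z ∈ ball (0 : ℂ) 1, ‖ω z‖ ≤ 1) :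
    ∀ z ∈ ball (0 : ℂ) 1, ∀ r : ℝ, r = ‖z‖ →
      (1 - 2 * lam * r ^ 2 - lam ^ 2 * r ^ 4) / (1 + lam * r ^ 2) ^ 2 ≤
        ((1 - (lam : ℂ) * (starRingEnd ℂ) (z ^ 2 * ω z)) *
            (1 + (lam : ℂ) * z * (z * ∫ s in (0 : ℝ)..1, ω ((s : ℂ) * z)))).re /
          (‖1 - (lam : ℂ) * z ^ 2 * ω z‖ *
            ‖1 + (lam : ℂ) * z * (z * ∫ s in (0 : ℝ)..1, ω ((s : ℂ) * z))‖) := by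
  rintro z hz r rfl
  have hr1 : ‖z‖ ≤ 1 := (mem_ball_zero_iff.mp hz).le
  have ht : lam * ‖z‖ ^ 2 ≤ lam := mul_le_of_le_one_right hlam.le (pow_le_one₀ (norm_nonneg z) hr1)
  have hint := norm_intervalIntegral_comp_ofReal_mul_le hω1 hz
  have ha : ‖(lam : ℂ) * z ^ 2 * ω z‖ ≤ lam * ‖z‖ ^ 2 := by
    rw [norm_mul, norm_mul, norm_pow, norm_real, Real.norm_of_nonneg hlam.le]
    exact mul_le_of_le_one_right (by positivity) (hω1 z hz)
  have hb : ‖(lam : ℂ) * z * (z * ∫ s in (0 : ℝ)..1, ω ((s : ℂ) * z))‖ ≤ lam * ‖z‖ ^ 2 := by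
    rw [norm_mul, norm_mul, norm_mul, norm_real, Real.norm_of_nonneg hlam.le, ← mul_assoc, sq,
      ← mul_assoc]
    exact mul_le_of_le_one_right (by positivity) hint
  have hconj : (lam : ℂ) * conj (z ^ 2 * ω z) = conj ((lam : ℂ) * z ^ 2 * ω z) := by
    rw [mul_assoc, map_mul conj (lam : ℂ), conj_ofReal]
  have key := div_le_re_div_norm_mul_norm (by positivity)
    (two_mul_add_sq_le_one (by positivity) (ht.trans hlam')) ha hb
  rw [hconj]
  convert key using 2
  ring

/-- If `H(z) = z/(1 + λ z ∫₀ᶻ ω(t) dt)` with `ω` analytic, `|ω| ≤ 1` on the unit disk and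
`λ ∈ (0, √2 − 1]`, then for `|z| = r < 1`,
`Re{(1 − λ conj(z²ω(z)))(1 + λ z ∫₀ᶻ ω)} / (|1 − λz²ω(z)| |1 + λ z ∫₀ᶻ ω|)
  ≥ (1 − 2λr² − λ²r⁴)/(1 + λr²)²`. Here `∫₀ᶻ ω(t) dt = z ∫₀¹ ω(sz) ds`. -/
theorem stmt_19 (lam : ℝ) (hlam : 0 < lam) (hlam' : lam ≤ Real.sqrt 2 - 1)
    (ω H : ℂ → ℂ) (hω : DifferentiableOn ℂ ω (ball (0 : ℂ) 1))
    (hω1 : ∀ z ∈ ball (0 : ℂ) 1, ‖ω z‖ ≤ 1)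
    (hH : ∀ z ∈ ball (0 : ℂ) 1,
      H z = z / (1 + (lam : ℂ) * z * (z * ∫ s in (0 : ℝ)..1, ω ((s : ℂ) * z)))) :
    ∀ z ∈ ball (0 : ℂ) 1, ∀ r : ℝ, r = ‖z‖ →
      (1 - 2 * lam * r ^ 2 - lam ^ 2 * r ^ 4) / (1 + lam * r ^ 2) ^ 2 ≤
        ((1 - (lam : ℂ) * (starRingEnd ℂ) (z ^ 2 * ω z)) *
            (1 + (lam : ℂ) * z * (z * ∫ s in (0 : ℝ)..1, ω ((s : ℂ) * z)))).re /
          (‖1 - (lam : ℂ) * z ^ 2 * ω z‖ *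
            ‖1 + (lam : ℂ) * z * (z * ∫ s in (0 : ℝ)..1, ω ((s : ℂ) * z))‖) :=
  stmt_19_general lam hlam hlam' ω hω1
end
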